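/- arXiv:0809.0433 — 9 statements merged into one kernel-verified Lean document; each statement's English description precedes it below -/
import Mathlib

section
/- (Hölder) A finite group E is isomorphic to a crossed product of a cyclic group of order n by a cyclic group of order m (equivalently, E has a normal subgroup N isomorphic to ZMod n such that the quotient E/N is isomorphic to ZMod m) if and only if there exist integers i, j with 0 ≤ i < n and 0 ≤ j < n such that n divides i·(j−1), n divides j^m − 1, and E is isomorphic to the presented group on two generators a, b with relators a^n, b^m·a^(−i), and b^(−1)·a·b·a^(−j). -/
/-!
If `N = ⟨a⟩ ≅ ℤ/n` is normal in `E` and `b` lifts a generator of `E/N ≅ ℤ/m`, then `bᵐ = aⁱ` and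
`b⁻¹ a b = aʲ`. Conjugating `bᵐ` by `b` gives `n ∣ i (j - 1)` and conjugating `a` by `bᵐ` gives
`n ∣ jᵐ - 1`; the presented group `P` then maps onto `E`, and this map is an isomorphism because
`|P| = n m = |E|`.

To see `|P| = n m`: in `P` the subgroup `⟨a⟩` is normal with cyclic quotient generated by `b`,
and `P ↠ ℤ/m` sending `b ↦ 1` shows that `b` has order `m` modulo `⟨a⟩`. That `a` has order
exactly `n` is seen in a model: in `ℤ/n ⋊ ℤ`, where `1 ∈ ℤ` acts by multiplication by the unit `j`,
the two divisibility conditions say precisely that `c = bᵐ a⁻ⁱ` is central for `a = (1, 0)` and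
`b = (0, -1)`, and `⟨c⟩` meets `⟨a⟩` trivially, so `a` keeps order `n` in the quotient by `⟨c⟩`.
-/

open Subgroup Multiplicative

universe u

def IsCyclicByCyclic (n m : ℕ) (G : Type*) [Group G] : Prop :=
  ∃ N : Subgroup G, ∃ hN : N.Normal, Nonempty (N ≃* Multiplicative (ZMod n)) ∧
    (haveI := hN; Nonempty (G ⧸ N ≃* Multiplicative (ZMod m)))

structure IsHolderPair {G : Type*} [Group G] (n m : ℕ) (i j : ℤ) (a b : G) : Prop where
  pow_a : a ^ n = 1
  pow_b : b ^ m = a ^ i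
  conj : b⁻¹ * a * b = a ^ j

theorem Nat.card_multiplicative (α : Type*) : Nat.card (Multiplicative α) = Nat.card α :=
  Nat.card_congr toAdd

section Cyclic

variable {G H : Type*} [Group G] [Group H] {n m : ℕ}

noncomputable def mulEquivZModOfCard [hG : IsCyclic G] (h : Nat.card G = n) :
    G ≃* Multiplicative (ZMod n) :=
  (zmodCyclicMulEquiv hG).symm.trans (ZMod.ringEquivCongr h).toAddEquiv.toMultiplicative

theorem orderOf_eq_of_pow_eq_one_of_orderOf_map {x : G} (f : G →* H) (hx : x ^ n = 1)
    (hfx : orderOf (f x) = n) : orderOf x = n :=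
  Nat.dvd_antisymm (orderOf_dvd_of_pow_eq_one hx) (hfx ▸ orderOf_map_dvd f x)

theorem QuotientGroup.orderOf_mk_of_disjoint {N : Subgroup G} [N.Normal] {a : G}
    (h : Disjoint N (zpowers a)) : orderOf (a : G ⧸ N) = orderOf a := by
  refine orderOf_eq_orderOf_iff.2 fun k => ?_
  rw [← QuotientGroup.mk_pow, QuotientGroup.eq_one_iff]
  exact ⟨fun hk => disjoint_def.1 h hk (npow_mem_zpowers a k), fun hk => hk ▸ N.one_mem⟩

theorem IsCyclicByCyclic.card_eq (h : IsCyclicByCyclic n m G) : Nat.card G = n * m := by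
  obtain ⟨N, hN, ⟨e₁⟩, ⟨e₂⟩⟩ := h
  rw [card_eq_card_quotient_mul_card_subgroup N, Nat.card_congr e₁.toEquiv,
    Nat.card_congr e₂.toEquiv, Nat.card_multiplicative, Nat.card_multiplicative, Nat.card_zmod,
    Nat.card_zmod, mul_comm]

theorem IsCyclicByCyclic.of_mulEquiv (e : G ≃* H) (h : IsCyclicByCyclic n m H) :
    IsCyclicByCyclic n m G := by
  obtain ⟨N, hN, ⟨e₁⟩, ⟨e₂⟩⟩ := h
  have hmap : (N.comap e.toMonoidHom).map e.toMonoidHom = N :=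
    map_comap_eq_self_of_surjective e.surjective N
  exact ⟨N.comap e.toMonoidHom, hN.comap _,
    ⟨((e.subgroupMap _).trans (MulEquiv.subgroupCongr hmap)).trans e₁⟩,
    ⟨(QuotientGroup.congr _ N e hmap).trans e₂⟩⟩

theorem isCyclicByCyclic_of_zpowers_mk_eq_top {a b : G} [(zpowers a).Normal]
    (hb : zpowers (b : G ⧸ zpowers a) = ⊤) :
    IsCyclicByCyclic (orderOf a) (orderOf (b : G ⧸ zpowers a)) G := by
  have : IsCyclic (G ⧸ zpowers a) := isCyclic_iff_exists_zpowers_eq_top.2 ⟨_, hb⟩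
  refine ⟨zpowers a, ‹_›, ⟨mulEquivZModOfCard (Nat.card_zpowers a)⟩, ⟨mulEquivZModOfCard ?_⟩⟩
  rw [← Nat.card_zpowers, hb, card_top]

theorem closure_pair_eq_top_of_zpowers_mk_eq_top {N : Subgroup G} [N.Normal] {a b : G}
    (ha : zpowers a = N) (hb : zpowers (b : G ⧸ N) = ⊤) : closure {a, b} = ⊤ := by
  have hmap : map (QuotientGroup.mk' N) (closure {a, b}) = ⊤ := by
    rw [eq_top_iff, ← hb, zpowers_le]
    exact mem_map_of_mem _ (subset_closure (by simp))
  have hN : N ≤ closure {a, b} := ha ▸ zpowers_le.2 (subset_closure (by simp))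
  have := comap_map_eq (QuotientGroup.mk' N) (closure {a, b})
  rwa [hmap, comap_top, QuotientGroup.ker_mk', sup_eq_left.2 hN, eq_comm] at this

theorem zpowers_mk_eq_top_of_closure_pair_eq_top {a b : G} [(zpowers a).Normal]
    (hgen : closure {a, b} = ⊤) : zpowers (b : G ⧸ zpowers a) = ⊤ := by
  rw [← MonoidHom.range_eq_top.2 (QuotientGroup.mk'_surjective (zpowers a)),
    MonoidHom.range_eq_map, ← hgen, MonoidHom.map_closure, Set.image_pair,
    QuotientGroup.mk'_apply, (QuotientGroup.eq_one_iff a).2 (mem_zpowers a), closure_insert_one]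
  exact zpowers_eq_closure _

end Cyclic

section Relations

variable {G : Type*} [Group G] {a b : G} {m : ℕ} {i j : ℤ}

theorem inv_mul_zpow_mul_eq_zpow (h : b⁻¹ * a * b = a ^ j) (s : ℤ) :
    b⁻¹ * a ^ s * b = a ^ (j * s) := by
  have := conj_zpow (a := b⁻¹) (b := a) (i := s)
  rw [inv_inv] at this
  rw [← this, h, ← zpow_mul]

theorem inv_pow_mul_zpow_mul_pow_eq_zpow (h : b⁻¹ * a * b = a ^ j) (t : ℕ) (s : ℤ) :
    (b ^ t)⁻¹ * a ^ s * b ^ t = a ^ (j ^ t * s) := by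
  induction t generalizing s with
  | zero => simp
  | succ t ih =>
    calc (b ^ (t + 1))⁻¹ * a ^ s * b ^ (t + 1) = b⁻¹ * ((b ^ t)⁻¹ * a ^ s * b ^ t) * b := by
          group
      _ = a ^ (j ^ (t + 1) * s) := by
          rw [ih, inv_mul_zpow_mul_eq_zpow h]
          ring_nf

theorem mul_mul_inv_eq_zpow (hm : m ≠ 0) (hb : b ^ m = a ^ i) (h : b⁻¹ * a * b = a ^ j) :
    b * a * b⁻¹ = a ^ j ^ (m - 1) := by
  obtain ⟨k, rfl⟩ := Nat.exists_eq_succ_of_ne_zero hm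
  -- only conjugation by `b⁻¹` is given; write `b = bᵐ b⁻⁽ᵐ⁻¹⁾` with `bᵐ ∈ ⟨a⟩`
  calc b * a * b⁻¹ = b ^ (k + 1) * ((b ^ k)⁻¹ * a ^ (1 : ℤ) * b ^ k) * (b ^ (k + 1))⁻¹ := by
        group
    _ = a ^ j ^ k := by
        rw [inv_pow_mul_zpow_mul_pow_eq_zpow h, hb, mul_one, ← zpow_neg, ← zpow_add, ← zpow_add,
          add_neg_cancel_comm]

theorem orderOf_dvd_mul_sub_one (hb : b ^ m = a ^ i) (h : b⁻¹ * a * b = a ^ j) :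
    (orderOf a : ℤ) ∣ i * (j - 1) := by
  have hcomm : b⁻¹ * b ^ m * b = b ^ m := by group
  rw [hb, inv_mul_zpow_mul_eq_zpow h, zpow_eq_zpow_iff_modEq] at hcomm
  simpa [mul_sub, mul_comm] using hcomm.symm.dvd

theorem orderOf_dvd_pow_sub_one (hb : b ^ m = a ^ i) (h : b⁻¹ * a * b = a ^ j) :
    (orderOf a : ℤ) ∣ j ^ m - 1 := by
  have hconj := inv_pow_mul_zpow_mul_pow_eq_zpow h m 1
  rw [hb, mul_one, ← zpow_neg, ← zpow_add, ← zpow_add, neg_add_cancel_comm,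
    zpow_eq_zpow_iff_modEq] at hconj
  exact hconj.dvd

theorem zpowers_normal_of_closure_pair_eq_top (hm : m ≠ 0) (hb : b ^ m = a ^ i)
    (h : b⁻¹ * a * b = a ^ j) (hgen : closure {a, b} = ⊤) : (zpowers a).Normal := by
  rw [← normalizer_eq_top_iff, eq_top_iff, ← hgen, closure_le]
  rintro x (rfl | rfl)
  · exact le_normalizer (mem_zpowers x)
  · refine mem_normalizer_iff.2 fun y => ⟨fun hy => ?_, fun hy => ?_⟩
    · obtain ⟨s, rfl⟩ := mem_zpowers_iff.1 hy
      rw [← conj_zpow, mul_mul_inv_eq_zpow hm hb h, ← zpow_mul]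
      exact zpow_mem_zpowers a _
    · obtain ⟨s, hs⟩ := mem_zpowers_iff.1 hy
      rw [show y = x⁻¹ * (x * y * x⁻¹) * x by group, ← hs, inv_mul_zpow_mul_eq_zpow h]
      exact zpow_mem_zpowers a _

end Relations

theorem IsCyclicByCyclic.exists_isHolderPair {G : Type*} [Group G] {n m : ℕ} (hn : n ≠ 0)
    (h : IsCyclicByCyclic n m G) :
    ∃ i j : ℤ, 0 ≤ i ∧ i < n ∧ 0 ≤ j ∧ j < n ∧
      ∃ a b : G, IsHolderPair n m i j a b ∧ orderOf a = n ∧ closure {a, b} = ⊤ := by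
  obtain ⟨N, hN, ⟨e₁⟩, ⟨e₂⟩⟩ := h
  obtain ⟨a, ha⟩ := N.isCyclic_iff_exists_zpowers_eq_top.1
    (isCyclic_of_surjective e₁.symm e₁.symm.surjective)
  obtain ⟨q, hq⟩ := isCyclic_iff_exists_zpowers_eq_top.1
    (isCyclic_of_surjective e₂.symm e₂.symm.surjective)
  obtain ⟨b, rfl⟩ := QuotientGroup.mk_surjective q
  have horder : orderOf a = n := by
    rw [← Nat.card_zpowers, ha, Nat.card_congr e₁.toEquiv, Nat.card_multiplicative, Nat.card_zmod]
  have hpow : b ^ m ∈ zpowers a := by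
    rw [ha, ← QuotientGroup.eq_one_iff, QuotientGroup.mk_pow,
      ← Nat.card_zmod m, ← Nat.card_multiplicative, ← Nat.card_congr e₂.toEquiv, pow_card_eq_one']
  have hconj : b⁻¹ * a * b ∈ zpowers a := by
    simpa [ha] using hN.conj_mem a (ha ▸ mem_zpowers a) b⁻¹
  obtain ⟨i, hi⟩ := mem_zpowers_iff.1 hpow
  obtain ⟨j, hj⟩ := mem_zpowers_iff.1 hconj
  have hn' : (0 : ℤ) < n := by omega
  refine ⟨i % n, j % n, Int.emod_nonneg _ hn'.ne', Int.emod_lt_of_pos _ hn',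
    Int.emod_nonneg _ hn'.ne', Int.emod_lt_of_pos _ hn', a, b, ⟨?_, ?_, ?_⟩, horder,
    closure_pair_eq_top_of_zpowers_mk_eq_top ha hq⟩
  · rw [← horder, pow_orderOf_eq_one]
  · rw [← horder, zpow_mod_orderOf, hi]
  · rw [← horder, zpow_mod_orderOf, hj]

theorem exists_isHolderPair_of_commute {G : Type u} [Group G] {n m : ℕ} {i j : ℤ} {a b : G}
    (ha : a ^ n = 1) (h : b⁻¹ * a * b = a ^ j) (hc : ∀ g, Commute g (b ^ m * a ^ (-i)))
    (hdisj : Disjoint (zpowers (b ^ m * a ^ (-i))) (zpowers a)) :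
    ∃ (Q : Type u) (_ : Group Q) (α β : Q), IsHolderPair n m i j α β ∧ orderOf α = orderOf a := by
  have : (zpowers (b ^ m * a ^ (-i))).Normal := ⟨fun x hx g => by
    obtain ⟨k, rfl⟩ := mem_zpowers_iff.1 hx
    rwa [((hc g).zpow_right k).eq, mul_inv_cancel_right]⟩
  let π := QuotientGroup.mk' (zpowers (b ^ m * a ^ (-i)))
  have hπc : π (b ^ m * a ^ (-i)) = 1 := (QuotientGroup.eq_one_iff _).2 (mem_zpowers _)
  refine ⟨_, inferInstance, π a, π b, ⟨?_, ?_, ?_⟩, QuotientGroup.orderOf_mk_of_disjoint hdisj⟩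
  · rw [← map_pow, ha, map_one]
  · refine mul_inv_eq_one.1 ?_
    rwa [← map_pow, ← map_zpow, ← map_inv, ← map_mul, ← zpow_neg]
  · rw [← map_inv, ← map_mul, ← map_mul, h, map_zpow]

namespace SemidirectProduct

variable {N G : Type*} [Group N] [Group G] {φ : G →* MulAut N}

theorem commute_inr_inl {g : G} {x : N} (h : φ g x = x) :
    Commute (inr g : N ⋊[φ] G) (inl x) := by
  have := inl_aut (φ := φ) g x
  rw [h, map_inv, eq_mul_inv_iff_mul_eq] at this
  exact this.symm

end SemidirectProduct

section Model

open SemidirectProduct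

variable {n m : ℕ} {i j : ℤ} (u : (ZMod n)ˣ)

def zpowersMulAut : Multiplicative ℤ →* MulAut (Multiplicative (ZMod n)) :=
  (MulAutMultiplicative (ZMod n)).symm.toMonoidHom.comp
    ((DistribMulAction.toAddAut (ZMod n)ˣ (ZMod n)).comp (zpowersHom _ u))

theorem zpowersMulAut_apply (k : ℤ) (x : ZMod n) :
    zpowersMulAut u (ofAdd k) (ofAdd x) = ofAdd (((u ^ k : (ZMod n)ˣ) : ZMod n) * x) := rfl

abbrev HolderModel := Multiplicative (ZMod n) ⋊[zpowersMulAut u] Multiplicative ℤ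

namespace HolderModel

def a : HolderModel u := inl (ofAdd 1)

def b : HolderModel u := inr (ofAdd (-1))

theorem a_zpow (k : ℤ) : a u ^ k = inl (ofAdd (k : ZMod n)) := by
  simp [a, ← map_zpow, ← ofAdd_zsmul]

theorem b_pow (k : ℕ) : b u ^ k = inr (ofAdd (-k : ℤ)) := by
  simp [b, ← map_pow, ← ofAdd_nsmul]

theorem orderOf_a : orderOf (a u) = n := by
  rw [a, orderOf_injective inl inl_injective, orderOf_ofAdd_eq_addOrderOf, ZMod.addOrderOf_one]

theorem inv_mul_mul_eq_zpow (hu : (u : ZMod n) = j) : (b u)⁻¹ * a u * b u = a u ^ j := by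
  have := inl_aut (φ := zpowersMulAut u) (ofAdd 1) (ofAdd 1)
  rw [zpowersMulAut_apply, zpow_one, mul_one, hu] at this
  rw [a_zpow, this]
  simp only [a, b, ofAdd_neg, map_inv, inv_inv]

theorem commute (hum : u ^ m = 1) (hui : u • (i : ZMod n) = i) (g : HolderModel u) :
    Commute g (b u ^ m * a u ^ (-i)) := by
  rw [a_zpow, b_pow, ← inl_left_mul_inr_right g]
  have hinl (x : Multiplicative (ZMod n)) :
      Commute (inr (ofAdd (-m : ℤ))) (inl x : HolderModel u) :=
    commute_inr_inl (by
      rw [← ofAdd_toAdd x, zpowersMulAut_apply, zpow_neg, zpow_natCast, hum, inv_one,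
        Units.val_one, one_mul])
  have hinr (y : Multiplicative ℤ) :
      Commute (inr y) (inl (ofAdd ((-i : ℤ) : ZMod n)) : HolderModel u) := by
    refine commute_inr_inl ?_
    have := (MulAction.stabilizer (ZMod n)ˣ (i : ZMod n)).zpow_mem hui (toAdd y)
    rw [MulAction.mem_stabilizer_iff, Units.smul_def, smul_eq_mul] at this
    rw [← ofAdd_toAdd y, zpowersMulAut_apply, Int.cast_neg, mul_neg, this]
  refine Commute.mul_left (Commute.mul_right (hinl _).symm ?_) (Commute.mul_right ?_ (hinr _))
  · exact (Commute.all _ _).map inl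
  · exact (Commute.all _ _).map inr

theorem disjoint_zpowers (hm : m ≠ 0) :
    Disjoint (zpowers (b u ^ m * a u ^ (-i))) (zpowers (a u)) := by
  refine disjoint_def.2 fun {x} hc ha => ?_
  obtain ⟨l, rfl⟩ := mem_zpowers_iff.1 hc
  obtain ⟨k, hk⟩ := mem_zpowers_iff.1 ha
  have := congrArg rightHom hk
  rw [a_zpow, rightHom_inl, map_zpow, map_mul, b_pow, a_zpow, rightHom_inr, rightHom_inl, mul_one,
    eq_comm, ← ofAdd_zsmul, ofAdd_eq_one, smul_eq_mul, mul_eq_zero] at this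
  obtain rfl : l = 0 := by omega
  exact zpow_zero _

end HolderModel

end Model

theorem exists_isHolderPair_orderOf_eq {n m : ℕ} (hm : m ≠ 0) {i j : ℤ}
    (hij : (n : ℤ) ∣ i * (j - 1)) (hj : (n : ℤ) ∣ j ^ m - 1) :
    ∃ (Q : Type) (_ : Group Q) (a b : Q), IsHolderPair n m i j a b ∧ orderOf a = n := by
  have hjm : (j : ZMod n) ^ m = 1 := by
    simpa [sub_eq_zero] using (ZMod.intCast_zmod_eq_zero_iff_dvd _ n).2 hj
  set u := Units.ofPowEqOne _ m hjm hm
  have hu : (u : ZMod n) = j := Units.val_ofPowEqOne _ _ _ _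
  have hui : u • (i : ZMod n) = i := by
    have := (ZMod.intCast_zmod_eq_zero_iff_dvd _ n).2 hij
    simp only [Int.cast_mul, Int.cast_sub, mul_sub, mul_one, sub_eq_zero] at this
    rw [Units.smul_def, hu, smul_eq_mul, mul_comm, this]
  obtain ⟨Q, _, α, β, hαβ, hα⟩ := exists_isHolderPair_of_commute
    (HolderModel.orderOf_a u ▸ pow_orderOf_eq_one _) (HolderModel.inv_mul_mul_eq_zpow u hu)
    (HolderModel.commute u (Units.pow_ofPowEqOne _ _) hui) (HolderModel.disjoint_zpowers u hm)
  exact ⟨Q, _, α, β, hαβ, hα.trans (HolderModel.orderOf_a u)⟩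

def holderRelators (n m : ℕ) (i j : ℤ) : Set (FreeGroup (Fin 2)) :=
  {FreeGroup.of 0 ^ n, FreeGroup.of 1 ^ m * FreeGroup.of 0 ^ (-i),
    (FreeGroup.of 1)⁻¹ * FreeGroup.of 0 * FreeGroup.of 1 * FreeGroup.of 0 ^ (-j)}

abbrev HolderGroup (n m : ℕ) (i j : ℤ) := PresentedGroup (holderRelators n m i j)

namespace HolderGroup

variable {G : Type*} [Group G] {n m : ℕ} {i j : ℤ} {x y : G}

theorem lift_eq_one_iff :
    (∀ r ∈ holderRelators n m i j, FreeGroup.lift ![x, y] r = 1) ↔ IsHolderPair n m i j x y := by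
  simp only [holderRelators, Set.mem_insert_iff, Set.mem_singleton_iff, forall_eq_or_imp,
    forall_eq, map_mul, map_pow, map_zpow, map_inv, FreeGroup.lift_apply_of,
    Matrix.cons_val_zero, Matrix.cons_val_one, zpow_neg, mul_inv_eq_one]
  exact ⟨fun ⟨h₁, h₂, h₃⟩ => ⟨h₁, h₂, h₃⟩, fun ⟨h₁, h₂, h₃⟩ => ⟨h₁, h₂, h₃⟩⟩

def a : HolderGroup n m i j := PresentedGroup.of 0

def b : HolderGroup n m i j := PresentedGroup.of 1

theorem isHolderPair : IsHolderPair n m i j (a : HolderGroup n m i j) b := by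
  refine lift_eq_one_iff.1 fun r hr => ?_
  have : FreeGroup.lift ![a, b] = PresentedGroup.mk (holderRelators n m i j) :=
    FreeGroup.ext_hom _ _ (by simp [Fin.forall_fin_two, a, b, PresentedGroup.of])
  rw [this]
  exact PresentedGroup.one_of_mem hr

theorem closure_pair_eq_top : closure {(a : HolderGroup n m i j), b} = ⊤ :=
  eq_top_iff.2 fun z _ => PresentedGroup.generated_by _ _
    (fun k => by fin_cases k <;> exact Subgroup.subset_closure (by simp [a, b])) z

def lift (h : IsHolderPair n m i j x y) : HolderGroup n m i j →* G :=
  PresentedGroup.toGroup (lift_eq_one_iff.2 h)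

@[simp]
theorem lift_a (h : IsHolderPair n m i j x y) : lift h a = x := PresentedGroup.toGroup.of _

@[simp]
theorem lift_b (h : IsHolderPair n m i j x y) : lift h b = y := PresentedGroup.toGroup.of _

theorem lift_surjective (h : IsHolderPair n m i j x y) (hgen : closure {x, y} = ⊤) :
    Function.Surjective (lift h) := by
  rw [← MonoidHom.range_eq_top, eq_top_iff, ← hgen, closure_le]
  rintro _ (rfl | rfl)
  exacts [⟨a, lift_a h⟩, ⟨b, lift_b h⟩]

theorem isHolderPair_one_ofAdd_one :
    IsHolderPair n m i j (1 : Multiplicative (ZMod m)) (ofAdd 1) where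
  pow_a := one_pow n
  pow_b := by rw [← ofAdd_nsmul, nsmul_one, ZMod.natCast_self, ofAdd_zero, one_zpow]
  conj := by rw [mul_one, inv_mul_cancel, one_zpow]

section Orders

variable (hm : m ≠ 0) (hij : (n : ℤ) ∣ i * (j - 1)) (hj : (n : ℤ) ∣ j ^ m - 1)
include hm hij hj

theorem orderOf_a : orderOf (a : HolderGroup n m i j) = n := by
  obtain ⟨Q, _, α, β, h, hα⟩ := exists_isHolderPair_orderOf_eq hm hij hj
  exact orderOf_eq_of_pow_eq_one_of_orderOf_map (lift h) isHolderPair.pow_a (by rw [lift_a, hα])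

theorem isCyclicByCyclic : IsCyclicByCyclic n m (HolderGroup n m i j) := by
  have := zpowers_normal_of_closure_pair_eq_top hm isHolderPair.pow_b
    isHolderPair.conj (closure_pair_eq_top (n := n) (i := i) (j := j))
  have hmk : zpowers (a : HolderGroup n m i j) ≤ (lift isHolderPair_one_ofAdd_one).ker := by
    rw [zpowers_le, MonoidHom.mem_ker, lift_a]
  have hb : ((b : HolderGroup n m i j) : HolderGroup n m i j ⧸ zpowers a) ^ m = 1 := by
    rw [← QuotientGroup.mk_pow, isHolderPair.pow_b, QuotientGroup.eq_one_iff]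
    exact zpow_mem_zpowers a i
  have hborder : orderOf ((b : HolderGroup n m i j) : HolderGroup n m i j ⧸ zpowers a) = m :=
    orderOf_eq_of_pow_eq_one_of_orderOf_map (QuotientGroup.lift _ _ hmk) hb (by
      rw [QuotientGroup.lift_mk, lift_b, orderOf_ofAdd_eq_addOrderOf, ZMod.addOrderOf_one])
  have := isCyclicByCyclic_of_zpowers_mk_eq_top (a := (a : HolderGroup n m i j))
    (zpowers_mk_eq_top_of_closure_pair_eq_top closure_pair_eq_top)
  rwa [orderOf_a hm hij hj, hborder] at this

noncomputable def mulEquivOfClosureEqTop (hn : n ≠ 0) (h : IsHolderPair n m i j x y)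
    (hgen : closure {x, y} = ⊤) (hcard : Nat.card G = n * m) : HolderGroup n m i j ≃* G :=
  have hP := (isCyclicByCyclic hm hij hj).card_eq
  have : Finite (HolderGroup n m i j) := Nat.finite_of_card_ne_zero (by simp [hP, hn, hm])
  MulEquiv.ofBijective (lift h) ((lift_surjective h hgen).bijective_of_nat_card_le (by omega))

end Orders

end HolderGroup

theorem holder_crossed_product_of_finite_cyclic_groups_general
    (n m : ℕ) (hn : 1 ≤ n) (hm : 1 ≤ m) (E : Type*) [Group E] :
    (∃ N : Subgroup E, ∃ hN : N.Normal,
        Nonempty (N ≃* Multiplicative (ZMod n)) ∧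
        (haveI := hN; Nonempty (E ⧸ N ≃* Multiplicative (ZMod m)))) ↔
      (∃ i j : ℤ, 0 ≤ i ∧ i < n ∧ 0 ≤ j ∧ j < n ∧
        (n : ℤ) ∣ i * (j - 1) ∧ (n : ℤ) ∣ j ^ m - 1 ∧
        Nonempty (E ≃* PresentedGroup
          ({FreeGroup.of 0 ^ n,
            FreeGroup.of 1 ^ m * FreeGroup.of 0 ^ (-i),
            (FreeGroup.of 1)⁻¹ * FreeGroup.of 0 * FreeGroup.of 1 * FreeGroup.of 0 ^ (-j)} :
            Set (FreeGroup (Fin 2))))) := by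
  constructor
  · intro hE
    obtain ⟨i, j, hi₀, hin, hj₀, hjn, a, b, hab, ha, hgen⟩ :=
      IsCyclicByCyclic.exists_isHolderPair (by omega) hE
    have hij := ha ▸ orderOf_dvd_mul_sub_one hab.pow_b hab.conj
    have hj := ha ▸ orderOf_dvd_pow_sub_one hab.pow_b hab.conj
    exact ⟨i, j, hi₀, hin, hj₀, hjn, hij, hj,
      ⟨(HolderGroup.mulEquivOfClosureEqTop (by omega) hij hj (by omega) hab hgen
        (IsCyclicByCyclic.card_eq hE)).symm⟩⟩
  · rintro ⟨i, j, -, -, -, -, hij, hj, ⟨e⟩⟩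
    exact (HolderGroup.isCyclicByCyclic (by omega) hij hj).of_mulEquiv e

/-- (Hölder) A finite group `E` is an extension of a cyclic group of order `n` by a cyclic
group of order `m` iff it has a presentation
`⟨a, b ∣ aⁿ, bᵐ a⁻ⁱ, b⁻¹ a b a⁻ʲ⟩` with `n ∣ i (j-1)` and `n ∣ jᵐ - 1`. -/
theorem holder_crossed_product_of_finite_cyclic_groups
    (n m : ℕ) (hn : 1 ≤ n) (hm : 1 ≤ m) (E : Type*) [Group E] [Finite E] :
    (∃ N : Subgroup E, ∃ hN : N.Normal,
        Nonempty (N ≃* Multiplicative (ZMod n)) ∧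
        (haveI := hN; Nonempty (E ⧸ N ≃* Multiplicative (ZMod m)))) ↔
      (∃ i j : ℤ, 0 ≤ i ∧ i < n ∧ 0 ≤ j ∧ j < n ∧
        (n : ℤ) ∣ i * (j - 1) ∧ (n : ℤ) ∣ j ^ m - 1 ∧
        Nonempty (E ≃* PresentedGroup
          ({FreeGroup.of 0 ^ n,
            FreeGroup.of 1 ^ m * FreeGroup.of 0 ^ (-i),
            (FreeGroup.of 1)⁻¹ * FreeGroup.of 0 * FreeGroup.of 1 * FreeGroup.of 0 ^ (-j)} :
            Set (FreeGroup (Fin 2))))) :=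
  holder_crossed_product_of_finite_cyclic_groups_general n m hn hm E
end

section
/- A group E is isomorphic to a crossed product of a finite cyclic group of order n by the infinite cyclic group (equivalently, E has a normal subgroup N isomorphic to ZMod n such that E/N is isomorphic to ℤ) if and only if there exists an integer t with gcd(t, n) = 1 such that E is isomorphic to the presented group on two generators a, g with relators a^n and g^(−1)·a·g·a^(−t). -/
/-!
An extension of any group by `ℤ` splits (send the generator to a preimage), so such an `E` is
`ZMod n ⋊[φ] ℤ`, and `φ` is determined by the automorphism `φ 1` of `ZMod n`, which is
multiplication by a unit `t`. Conversely `⟨a, g ∣ aⁿ, g⁻¹ a g a⁻ᵗ⟩` is this semidirect product: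
`a ↦ (1, 0)`, `g ↦ (0, -1)` respects the relations and is inverted by `(x, k) ↦ aˣ g⁻ᵏ`.
Finally `t` is a unit modulo `n` iff `gcd(t, n) = 1`.
-/

open Multiplicative SemidirectProduct

section ZModHom

variable {n : ℕ}

theorem MonoidHom.ext_mzmod {M : Type*} [Monoid M] {f g : Multiplicative (ZMod n) →* M}
    (h : f (ofAdd 1) = g (ofAdd 1)) : f = g := by
  have hπ : Function.Surjective (Int.castAddHom (ZMod n)).toMultiplicative :=
    ZMod.intCast_surjective
  refine (MonoidHom.cancel_right hπ).1 (MonoidHom.ext_mint ?_)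
  simpa using h

variable {G : Type*} [Group G] {a : G}

noncomputable def zmodPowersHom (ha : a ^ n = 1) : Multiplicative (ZMod n) →* G :=
  AddMonoidHom.toMultiplicativeLeft <| ZMod.lift n
    ⟨zmultiplesHom (Additive G) (Additive.ofMul a), by simp [← ofMul_pow, ha]⟩

theorem zmodPowersHom_ofAdd_intCast (ha : a ^ n = 1) (k : ℤ) :
    zmodPowersHom ha (ofAdd (k : ZMod n)) = a ^ k := by
  simp [zmodPowersHom]

theorem zmodPowersHom_ofAdd_one (ha : a ^ n = 1) : zmodPowersHom ha (ofAdd 1) = a := by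
  simpa using zmodPowersHom_ofAdd_intCast ha 1

end ZModHom

theorem Function.Semiconj.mulAut_zpow {N H : Type*} [Mul N] [Mul H] {f : N → H}
    {σ : MulAut N} {τ : MulAut H} (hf : Function.Semiconj f σ τ) (k : ℤ) :
    Function.Semiconj f ⇑(σ ^ k) ⇑(τ ^ k) := by
  induction k using Int.induction_on with
  | zero => exact Function.Semiconj.id_right
  | succ k ih =>
    rw [zpow_add_one, zpow_add_one, MulAut.coe_mul, MulAut.coe_mul]
    exact ih.comp_right hf
  | pred k ih =>
    rw [zpow_sub_one, zpow_sub_one, MulAut.coe_mul, MulAut.coe_mul]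
    exact ih.comp_right (hf.inverses_right σ.apply_inv_self τ.inv_apply_self)

namespace SemidirectProduct

variable {N H : Type*} [Group N] [Group H] {φ : Multiplicative ℤ →* MulAut N}

def liftInt (f : N →* H) (h : H) (hf : ∀ x, f (φ (ofAdd 1) x) = h * f x * h⁻¹) :
    N ⋊[φ] Multiplicative ℤ →* H :=
  lift f (zpowersHom H h) fun k => by
    ext x
    have hk : φ k = φ (ofAdd 1) ^ k.toAdd := by
      rw [← map_zpow, ← ofAdd_zsmul, smul_eq_mul, mul_one, ofAdd_toAdd]
    simpa [hk, zpowersHom_apply, map_zpow] using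
      Function.Semiconj.mulAut_zpow (τ := MulAut.conj h) hf k.toAdd x

@[simp]
theorem liftInt_inl (f : N →* H) (h : H) (hf) (x : N) : liftInt (φ := φ) f h hf (inl x) = f x :=
  lift_inl ..

@[simp]
theorem liftInt_inr (f : N →* H) (h : H) (hf) (k : Multiplicative ℤ) :
    liftInt (φ := φ) f h hf (inr k) = h ^ k.toAdd :=
  lift_inr ..

end SemidirectProduct

abbrev metacyclicRels (n : ℕ) (t : ℤ) : Set (FreeGroup (Fin 2)) :=
  {FreeGroup.of 0 ^ n,
    (FreeGroup.of 1)⁻¹ * FreeGroup.of 0 * FreeGroup.of 1 * FreeGroup.of 0 ^ (-t)}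

namespace Metacyclic

variable {n : ℕ} {t : ℤ}

local notation "P" => PresentedGroup (metacyclicRels n t)

theorem of_zero_pow : (PresentedGroup.of 0 : P) ^ n = 1 :=
  PresentedGroup.one_of_mem (Set.mem_insert _ _)

theorem of_one_inv_mul_of_zero_mul_of_one :
    (PresentedGroup.of 1 : P)⁻¹ * PresentedGroup.of 0 * PresentedGroup.of 1 =
      PresentedGroup.of 0 ^ t := by
  rw [← mul_inv_eq_one, ← zpow_neg]
  exact PresentedGroup.one_of_mem (Set.mem_insert_of_mem _ rfl)

variable (φ : Multiplicative ℤ →* MulAut (Multiplicative (ZMod n)))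

-- `g` goes to the inverse of the generator of `ℤ`, so that `g⁻¹ a g` is `a` acted on by `φ 1`.
def toSemidirectProduct (hφ : φ (ofAdd 1) (ofAdd 1) = ofAdd (t : ZMod n)) :
    P →* Multiplicative (ZMod n) ⋊[φ] Multiplicative ℤ :=
  PresentedGroup.toGroup (f := ![inl (ofAdd 1), inr (ofAdd (-1))]) <| by
    rintro r (rfl | rfl)
    · simp only [map_pow, FreeGroup.lift_apply_of, Matrix.cons_val_zero]
      rw [← map_pow, ← ofAdd_nsmul, nsmul_one, ZMod.natCast_self, ofAdd_zero, map_one]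
    · simp only [map_mul, map_inv, map_zpow, FreeGroup.lift_apply_of, Matrix.cons_val_zero,
        Matrix.cons_val_one, ofAdd_neg, inv_inv]
      rw [← map_inv, ← inl_aut, hφ, ← map_zpow, ← map_mul, ← ofAdd_zsmul, ← ofAdd_add]
      simp

noncomputable def ofSemidirectProduct (hφ : φ (ofAdd 1) (ofAdd 1) = ofAdd (t : ZMod n)) :
    Multiplicative (ZMod n) ⋊[φ] Multiplicative ℤ →* P :=
  liftInt (zmodPowersHom of_zero_pow) (PresentedGroup.of 1)⁻¹ fun x => by
    have h : (zmodPowersHom of_zero_pow).comp (φ (ofAdd 1)).toMonoidHom =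
        (MulAut.conj (PresentedGroup.of 1 : P)⁻¹).toMonoidHom.comp (zmodPowersHom of_zero_pow) :=
      MonoidHom.ext_mzmod (by simp [hφ, zmodPowersHom_ofAdd_intCast, zmodPowersHom_ofAdd_one,
        of_one_inv_mul_of_zero_mul_of_one])
    simpa using DFunLike.congr_fun h x

noncomputable def equivSemidirectProduct (hφ : φ (ofAdd 1) (ofAdd 1) = ofAdd (t : ZMod n)) :
    P ≃* Multiplicative (ZMod n) ⋊[φ] Multiplicative ℤ :=
  MonoidHom.toMulEquiv (toSemidirectProduct φ hφ) (ofSemidirectProduct φ hφ)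
    (PresentedGroup.ext fun i => by
      fin_cases i <;> simp [toSemidirectProduct, ofSemidirectProduct, zmodPowersHom_ofAdd_one])
    (hom_ext
      (MonoidHom.ext_mzmod (by
        simp [toSemidirectProduct, ofSemidirectProduct, zmodPowersHom_ofAdd_one]))
      (MonoidHom.ext_mint (by simp [toSemidirectProduct, ofSemidirectProduct])))

end Metacyclic

namespace GroupExtension

variable {N E G E' : Type*} [Group N] [Group E] [Group G] [Group E']

def congrMiddle (S : GroupExtension N E G) (e : E ≃* E') : GroupExtension N E' G where
  inl := (e : E →* E').comp S.inl
  rightHom := S.rightHom.comp (e.symm : E' →* E)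
  inl_injective := e.injective.comp S.inl_injective
  range_inl_eq_ker_rightHom := by
    rw [MonoidHom.range_comp, ← MonoidHom.comap_ker, S.range_inl_eq_ker_rightHom,
      Subgroup.map_equiv_eq_comap_symm]
  rightHom_surjective := S.rightHom_surjective.comp e.symm.surjective

noncomputable def intSplitting (S : GroupExtension N E (Multiplicative ℤ)) : S.Splitting where
  toMonoidHom := zpowersHom E (Classical.choose (S.rightHom_surjective (ofAdd 1)))
  rightInverse_rightHom k := by
    simp [Classical.choose_spec (S.rightHom_surjective (ofAdd 1)), ← ofAdd_zsmul]

theorem nonempty_iff_exists_mulEquiv_semidirectProduct :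
    Nonempty (GroupExtension N E (Multiplicative ℤ)) ↔
      ∃ φ : Multiplicative ℤ →* MulAut N, Nonempty (E ≃* N ⋊[φ] Multiplicative ℤ) :=
  ⟨fun ⟨S⟩ => ⟨_, ⟨S.intSplitting.semidirectProductMulEquiv.symm⟩⟩,
    fun ⟨φ, ⟨e⟩⟩ => ⟨(toGroupExtension φ).congrMiddle e.symm⟩⟩

end GroupExtension

theorem Subgroup.exists_normal_iff_nonempty_groupExtension {N E G : Type*}
    [Group N] [Group E] [Group G] :
    (∃ K : Subgroup E, ∃ hK : K.Normal,
        Nonempty (K ≃* N) ∧ (haveI := hK; Nonempty (E ⧸ K ≃* G))) ↔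
      Nonempty (GroupExtension N E G) := by
  constructor
  · rintro ⟨K, hK, ⟨e⟩, ⟨q⟩⟩
    refine ⟨{ inl := K.subtype.comp (e.symm : N →* K)
              rightHom := (q : E ⧸ K →* G).comp (QuotientGroup.mk' K)
              inl_injective := K.subtype_injective.comp e.symm.injective
              range_inl_eq_ker_rightHom := ?_
              rightHom_surjective := q.surjective.comp (QuotientGroup.mk'_surjective K) }⟩
    rw [MonoidHom.range_comp, MonoidHom.range_eq_top.mpr e.symm.surjective,
      ← MonoidHom.range_eq_map, K.range_subtype, MonoidHom.ker_mulEquiv_comp,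
      QuotientGroup.ker_mk']
  · rintro ⟨S⟩
    exact ⟨S.rightHom.ker, S.rightHom.normal_ker,
      ⟨((MonoidHom.ofInjective S.inl_injective).trans
        (MulEquiv.subgroupCongr S.range_inl_eq_ker_rightHom)).symm⟩,
      ⟨S.quotientKerRightHomEquivRight⟩⟩

theorem ZMod.exists_mulAut_apply_ofAdd_one_iff {n : ℕ} (x : ZMod n) :
    (∃ σ : MulAut (Multiplicative (ZMod n)), σ (ofAdd 1) = ofAdd x) ↔ IsUnit x := by
  constructor
  · rintro ⟨σ, hσ⟩
    have hu : ((AddAutEquivUnits n (MulAutMultiplicative _ σ).toAdd).toMul : ZMod n) = x :=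
      congrArg toAdd hσ
    exact hu ▸ Units.isUnit _
  · rintro ⟨u, rfl⟩
    exact ⟨(MulAutMultiplicative _).symm (ofAdd ((AddAutEquivUnits n).symm (Additive.ofMul u))),
      congrArg ofAdd (mul_one (u : ZMod n))⟩

theorem ZMod.isUnit_intCast_iff_gcd_eq_one (t : ℤ) (n : ℕ) :
    IsUnit (t : ZMod n) ↔ Int.gcd t n = 1 := by
  rw [coe_int_isUnit_iff_isCoprime, isCoprime_comm, Int.isCoprime_iff_gcd_eq_one]

theorem crossed_product_finite_cyclic_by_infinite_cyclic_general
    (n : ℕ) (E : Type*) [Group E] :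
    (∃ N : Subgroup E, ∃ hN : N.Normal,
        Nonempty (N ≃* Multiplicative (ZMod n)) ∧
        (haveI := hN; Nonempty (E ⧸ N ≃* Multiplicative ℤ))) ↔
      (∃ t : ℤ, Int.gcd t n = 1 ∧
        Nonempty (E ≃* PresentedGroup
          ({FreeGroup.of 0 ^ n,
            (FreeGroup.of 1)⁻¹ * FreeGroup.of 0 * FreeGroup.of 1 * FreeGroup.of 0 ^ (-t)} :
            Set (FreeGroup (Fin 2))))) := by
  rw [Subgroup.exists_normal_iff_nonempty_groupExtension,
    GroupExtension.nonempty_iff_exists_mulEquiv_semidirectProduct]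
  constructor
  · rintro ⟨φ, ⟨e⟩⟩
    set x := (φ (ofAdd 1) (ofAdd 1)).toAdd
    have hx : IsUnit x := (ZMod.exists_mulAut_apply_ofAdd_one_iff x).mp ⟨_, rfl⟩
    refine ⟨ZMod.cast x, ?_, ⟨e.trans (Metacyclic.equivSemidirectProduct φ ?_).symm⟩⟩
    · rwa [← ZMod.isUnit_intCast_iff_gcd_eq_one, ZMod.intCast_zmod_cast]
    · rw [ZMod.intCast_zmod_cast, ofAdd_toAdd]
  · rintro ⟨t, ht, ⟨e⟩⟩
    obtain ⟨σ, hσ⟩ := (ZMod.exists_mulAut_apply_ofAdd_one_iff (t : ZMod n)).mpr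
      ((ZMod.isUnit_intCast_iff_gcd_eq_one t n).mpr ht)
    exact ⟨zpowersHom _ σ, ⟨e.trans (Metacyclic.equivSemidirectProduct _ (by simpa using hσ))⟩⟩

/-- A group `E` is an extension of a cyclic group of order `n` by the infinite cyclic group
iff it has a presentation `⟨a, g ∣ aⁿ, g⁻¹ a g a⁻ᵗ⟩` for some `t` coprime to `n`. -/
theorem crossed_product_finite_cyclic_by_infinite_cyclic
    (n : ℕ) (hn : 1 ≤ n) (E : Type*) [Group E] :
    (∃ N : Subgroup E, ∃ hN : N.Normal,
        Nonempty (N ≃* Multiplicative (ZMod n)) ∧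
        (haveI := hN; Nonempty (E ⧸ N ≃* Multiplicative ℤ))) ↔
      (∃ t : ℤ, Int.gcd t n = 1 ∧
        Nonempty (E ≃* PresentedGroup
          ({FreeGroup.of 0 ^ n,
            (FreeGroup.of 1)⁻¹ * FreeGroup.of 0 * FreeGroup.of 1 * FreeGroup.of 0 ^ (-t)} :
            Set (FreeGroup (Fin 2))))) :=
  crossed_product_finite_cyclic_by_infinite_cyclic_general n E
end

section
/- Let n ≥ 2 be a natural number and t an integer. The presented group E = ⟨g, h ∣ h^n·g^(−t), g·h·g^(−1)·h^(−1)⟩ (the abelian group on generators g, h with the single relation h^n = g^t) is an infinite cyclic group (isomorphic to ℤ) if and only if gcd(n, t) = 1. -/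
/-!
If `n a + t b = 1`, then `z = gᵃ hᵇ` satisfies `zⁿ = g` and `zᵗ = h`, so `g ↦ n, h ↦ t` has the
inverse `1 ↦ z`. If a prime `p` divides both `n` and `t`, then `g ↦ (1, 0), h ↦ (0, 1)` maps the
group onto `(ℤ/p)²`, which is not cyclic.
-/

theorem Commute.zpow_bezout_eq {G : Type*} [Group G] {x y : G} (hxy : Commute x y) {n t a b : ℤ}
    (hrel : y ^ n = x ^ t) (hbez : n * a + t * b = 1) :
    (x ^ a * y ^ b) ^ n = x ∧ (x ^ a * y ^ b) ^ t = y := by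
  have hmul (m : ℤ) : (x ^ a * y ^ b) ^ m = x ^ (a * m) * y ^ (b * m) := by
    rw [(hxy.zpow_zpow a b).mul_zpow, ← zpow_mul, ← zpow_mul]
  constructor
  · calc (x ^ a * y ^ b) ^ n = x ^ (a * n) * (y ^ n) ^ b := by rw [hmul, ← zpow_mul, mul_comm n b]
      _ = x ^ (n * a + t * b) := by rw [hrel, ← zpow_mul, ← zpow_add]; ring_nf
      _ = x := by rw [hbez, zpow_one]
  · calc (x ^ a * y ^ b) ^ t = (x ^ t) ^ a * y ^ (b * t) := by rw [hmul, ← zpow_mul, mul_comm t a]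
      _ = y ^ (n * a + t * b) := by rw [← hrel, ← zpow_mul, ← zpow_add]; ring_nf
      _ = y := by rw [hbez, zpow_one]

theorem not_isAddCyclic_prod_self (M : Type*) [AddGroup M] [Finite M] [Nontrivial M] :
    ¬ IsAddCyclic (M × M) := fun _ ↦
  Finite.one_lt_card.ne' ((Nat.coprime_self _).mp (coprime_card_of_isAddCyclic_prod M M))

def commPowRels (n : ℕ) (t : ℤ) : Set (FreeGroup (Fin 2)) :=
  {FreeGroup.of 1 ^ n * FreeGroup.of 0 ^ (-t),
   FreeGroup.of 0 * FreeGroup.of 1 * (FreeGroup.of 0)⁻¹ * (FreeGroup.of 1)⁻¹}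

abbrev CommPowGroup (n : ℕ) (t : ℤ) := PresentedGroup (commPowRels n t)

namespace CommPowGroup

variable {n : ℕ} {t : ℤ}

theorem commute_of : Commute (.of 0 : CommPowGroup n t) (.of 1) := by
  have h := PresentedGroup.one_of_mem (rels := commPowRels n t) (.inr rfl)
  simp only [map_mul, map_inv] at h
  exact commutatorElement_eq_one_iff_commute.mp h

theorem of_one_pow : (.of 1 : CommPowGroup n t) ^ n = .of 0 ^ t := by
  have h := PresentedGroup.one_of_mem (rels := commPowRels n t) (.inl rfl)
  simp only [map_mul, map_pow, zpow_neg] at h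
  exact mul_inv_eq_one.mp h

variable {G : Type*} [Group G]

def lift (x y : G) (hxy : Commute x y) (hrel : y ^ n = x ^ t) : CommPowGroup n t →* G :=
  PresentedGroup.toGroup (f := ![x, y]) <| by
    rintro r (rfl | rfl)
    · simp [hrel]
    · simp [hxy.eq]

@[simp] theorem lift_of_zero (x y : G) (hxy : Commute x y) (hrel : y ^ n = x ^ t) :
    lift x y hxy hrel (.of 0) = x :=
  PresentedGroup.toGroup.of _

@[simp] theorem lift_of_one (x y : G) (hxy : Commute x y) (hrel : y ^ n = x ^ t) :
    lift x y hxy hrel (.of 1) = y :=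
  PresentedGroup.toGroup.of _

theorem not_isCyclic_of_prime_dvd {p : ℕ} (hp : p.Prime) (hn : (p : ℤ) ∣ n) (ht : (p : ℤ) ∣ t) :
    ¬ IsCyclic (CommPowGroup n t) := by
  have : Fact p.Prime := ⟨hp⟩
  have hrel : (Multiplicative.ofAdd ((0, 1) : ZMod p × ZMod p)) ^ n = .ofAdd (1, 0) ^ t := by
    rw [← ofAdd_nsmul, ← ofAdd_zsmul]
    simp [(ZMod.intCast_zmod_eq_zero_iff_dvd _ p).mpr ht,
      (ZMod.natCast_eq_zero_iff n p).mpr (by exact_mod_cast hn)]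
  let f := lift _ _ (Commute.all _ _) hrel
  have hf : Function.Surjective f := by
    intro w
    refine ⟨.of 0 ^ (w.toAdd.1.val) * .of 1 ^ (w.toAdd.2.val), ?_⟩
    simp [f, ← ofAdd_nsmul, ← ofAdd_add]
  intro _
  exact not_isAddCyclic_prod_self (ZMod p)
    (isCyclic_multiplicative_iff.mp (isCyclic_of_surjective f hf))

noncomputable def mulEquivInt (h : Int.gcd n t = 1) : CommPowGroup n t ≃* Multiplicative ℤ := by
  have hbez : (n : ℤ) * Int.gcdA n t + t * Int.gcdB n t = 1 := by
    rw [← Int.gcd_eq_gcd_ab, h, Nat.cast_one]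
  obtain ⟨hg, hh⟩ := commute_of.zpow_bezout_eq (by rw [zpow_natCast]; exact of_one_pow) hbez
  refine (lift (.ofAdd n) (.ofAdd t) (Commute.all _ _) ?_).toMulEquiv
    (zpowersHom _ (.of 0 ^ Int.gcdA n t * .of 1 ^ Int.gcdB n t)) ?_ ?_
  · rw [← ofAdd_nsmul, ← ofAdd_zsmul]; simp [mul_comm]
  · refine PresentedGroup.ext fun i => ?_
    fin_cases i
    · simpa using hg
    · simpa using hh
  · refine MonoidHom.ext_mint ?_
    simp only [MonoidHom.comp_apply, zpowersHom_apply, MonoidHom.id_apply, toAdd_ofAdd, zpow_one,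
      map_mul, map_zpow, lift_of_zero, lift_of_one, ← ofAdd_zsmul, ← ofAdd_add, smul_eq_mul]
    rw [← hbez, mul_comm (Int.gcdA _ _), mul_comm (Int.gcdB _ _)]

end CommPowGroup

theorem abelian_presented_group_infinite_cyclic_iff_general (n : ℕ) (t : ℤ) :
    Nonempty (PresentedGroup
        ({FreeGroup.of 1 ^ n * FreeGroup.of 0 ^ (-t),
          FreeGroup.of 0 * FreeGroup.of 1 * (FreeGroup.of 0)⁻¹ * (FreeGroup.of 1)⁻¹} :
          Set (FreeGroup (Fin 2))) ≃* Multiplicative ℤ) ↔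
      Int.gcd n t = 1 := by
  change Nonempty (CommPowGroup n t ≃* Multiplicative ℤ) ↔ _
  refine ⟨fun ⟨e⟩ => ?_, fun h => ⟨CommPowGroup.mulEquivInt h⟩⟩
  by_contra hgcd
  obtain ⟨p, hp, hpd⟩ := Nat.exists_prime_and_dvd hgcd
  have hpgcd : (p : ℤ) ∣ Int.gcd n t := Int.natCast_dvd_natCast.mpr hpd
  exact CommPowGroup.not_isCyclic_of_prime_dvd hp (hpgcd.trans (Int.gcd_dvd_left _ _))
    (hpgcd.trans (Int.gcd_dvd_right _ _)) (isCyclic_of_surjective e.symm e.symm.surjective)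

/-- The presented group `⟨g, h ∣ hⁿ = gᵗ, gh = hg⟩` (with `n ≥ 2`) is infinite cyclic
(isomorphic to `ℤ`) iff `gcd(n, t) = 1`. -/
theorem abelian_presented_group_infinite_cyclic_iff (n : ℕ) (hn : 2 ≤ n) (t : ℤ) :
    Nonempty (PresentedGroup
        ({FreeGroup.of 1 ^ n * FreeGroup.of 0 ^ (-t),
          FreeGroup.of 0 * FreeGroup.of 1 * (FreeGroup.of 0)⁻¹ * (FreeGroup.of 1)⁻¹} :
          Set (FreeGroup (Fin 2))) ≃* Multiplicative ℤ) ↔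
      Int.gcd n t = 1 :=
  abelian_presented_group_infinite_cyclic_iff_general n t
end

section
/- Let m ≥ 2 and let n be a natural number (with ZMod 0 = ℤ, covering the infinite cyclic case). The set of symmetric normalized 2-cocycles f : ZMod m × ZMod m → ZMod n (for the trivial action), i.e., maps f satisfying f(g₁, g₂) = f(g₂, g₁) for all g₁, g₂, f(0, 0) = 0, and f(g₁, g₂) + f(g₁ + g₂, g₃) = f(g₂, g₃) + f(g₁, g₂ + g₃) for all g₁, g₂, g₃ ∈ ZMod m, is in bijection with the set of functions φ : ZMod m → ZMod n satisfying φ(0) = 0; the bijection sends a cocycle f to the function φ given by φ(k) = f(1, k). -/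
open Finset

/-- Partial sum construction for cocycles. -/
private def cS {m n : ℕ} (φ : ZMod m → ZMod n) (N : ℕ) (b : ZMod m) : ZMod n :=
  ∑ i ∈ Finset.range N, (φ (b + (i : ZMod m)) - φ ((i : ZMod m)))

private lemma sum_range_cast {m n : ℕ} [NeZero m] (g : ZMod m → ZMod n) :
    ∑ i ∈ Finset.range m, g (i : ZMod m) = ∑ x : ZMod m, g x := by
  refine Finset.sum_nbij' (fun k : ℕ => (k : ZMod m)) (fun x => x.val) ?_ ?_ ?_ ?_ ?_
  · intro a _; exact Finset.mem_univ _
  · intro x _; exact Finset.mem_range.2 (ZMod.val_lt x)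
  · intro a ha; exact ZMod.val_cast_of_lt (Finset.mem_range.1 ha)
  · intro x _; exact ZMod.natCast_rightInverse x
  · intro a _; rfl

private lemma sum_shift {m n : ℕ} [NeZero m] (φ : ZMod m → ZMod n) (c : ZMod m) :
    ∑ i ∈ Finset.range m, φ (c + (i : ZMod m)) = ∑ x : ZMod m, φ x := by
  rw [sum_range_cast (fun x => φ (c + x))]
  exact Fintype.sum_equiv (Equiv.addLeft c) _ _ (fun x => rfl)

private lemma cS_add_m {m n : ℕ} [NeZero m] (φ : ZMod m → ZMod n) (N : ℕ) (b : ZMod m) :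
    cS φ (N + m) b = cS φ N b := by
  unfold cS
  rw [Finset.sum_range_add]
  have h1 : ∑ i ∈ Finset.range m,
      (φ (b + ((N + i : ℕ) : ZMod m)) - φ (((N + i : ℕ) : ZMod m))) = 0 := by
    rw [Finset.sum_sub_distrib]
    have e1 : ∑ i ∈ Finset.range m, φ (b + ((N + i : ℕ) : ZMod m))
        = ∑ i ∈ Finset.range m, φ ((b + (N : ZMod m)) + (i : ZMod m)) := by
      refine Finset.sum_congr rfl fun i _ => ?_
      rw [Nat.cast_add, ← add_assoc]
    have e2 : ∑ i ∈ Finset.range m, φ (((N + i : ℕ) : ZMod m))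
        = ∑ i ∈ Finset.range m, φ ((N : ZMod m) + (i : ZMod m)) := by
      refine Finset.sum_congr rfl fun i _ => ?_
      rw [Nat.cast_add]
    rw [e1, e2, sum_shift, sum_shift, sub_self]
  rw [h1, add_zero]

private lemma cS_congr {m n : ℕ} [NeZero m] (φ : ZMod m → ZMod n) {N N' : ℕ}
    (h : N % m = N' % m) (b : ZMod m) : cS φ N b = cS φ N' b := by
  have aux : ∀ q r, cS φ (r + m * q) b = cS φ r b := by
    intro q
    induction q with
    | zero => intro r; simp
    | succ q ih =>
        intro r
        have e : r + m * (q + 1) = (r + m * q) + m := by ring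
        rw [e, cS_add_m, ih]
  have g1 : cS φ N b = cS φ (N % m) b := by
    conv_lhs => rw [show N = N % m + m * (N / m) from (Nat.mod_add_div N m).symm]
    exact aux _ _
  have g2 : cS φ N' b = cS φ (N' % m) b := by
    conv_lhs => rw [show N' = N' % m + m * (N' / m) from (Nat.mod_add_div N' m).symm]
    exact aux _ _
  rw [g1, g2, h]

private lemma cS_cocycle {m n : ℕ} [NeZero m] (φ : ZMod m → ZMod n) (a b c : ZMod m) :
    cS φ a.val b + cS φ (a + b).val c = cS φ b.val c + cS φ a.val (b + c) := by
  have hb : ((b.val : ℕ) : ZMod m) = b := ZMod.natCast_rightInverse b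
  have h1 : cS φ (a + b).val c = cS φ (b.val + a.val) c := by
    refine cS_congr φ ?_ c
    rw [ZMod.val_add, Nat.mod_mod_of_dvd _ dvd_rfl, Nat.add_comm]
  rw [h1]
  unfold cS
  rw [Finset.sum_range_add, add_left_comm]
  congr 1
  rw [← Finset.sum_add_distrib]
  refine Finset.sum_congr rfl fun i _ => ?_
  push_cast [hb]
  rw [show b + c + (i : ZMod m) = c + (b + (i : ZMod m)) from by ring]
  abel

private lemma cS_eq {m n : ℕ} (φ : ZMod m → ZMod n) (N M : ℕ) :
    cS φ N ((M : ZMod m)) = (∑ i ∈ Finset.range (M + N), φ (i : ZMod m))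
      - (∑ i ∈ Finset.range M, φ (i : ZMod m)) - (∑ i ∈ Finset.range N, φ (i : ZMod m)) := by
  unfold cS
  rw [Finset.sum_sub_distrib]
  congr 1
  rw [Finset.sum_range_add, add_sub_cancel_left]
  exact Finset.sum_congr rfl fun i _ => by push_cast; ring_nf

private lemma cS_symm {m n : ℕ} [NeZero m] (φ : ZMod m → ZMod n) (a b : ZMod m) :
    cS φ a.val b = cS φ b.val a := by
  have ha : ((a.val : ℕ) : ZMod m) = a := ZMod.natCast_rightInverse a
  have hb : ((b.val : ℕ) : ZMod m) = b := ZMod.natCast_rightInverse b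
  conv_lhs => rw [← hb]
  conv_rhs => rw [← ha]
  rw [cS_eq, cS_eq, Nat.add_comm, sub_right_comm]

private lemma cocycle_zero {m n : ℕ} {f : ZMod m × ZMod m → ZMod n}
    (h0 : f (0, 0) = 0)
    (hc : ∀ g₁ g₂ g₃ : ZMod m,
      f (g₁, g₂) + f (g₁ + g₂, g₃) = f (g₂, g₃) + f (g₁, g₂ + g₃)) (b : ZMod m) :
    f (b, 0) = 0 := by
  have h := hc b 0 0
  simp only [add_zero, zero_add] at h
  have h2 := add_right_cancel h
  rw [h0] at h2
  exact h2

private lemma cocycle_eq {m n : ℕ} [NeZero m] {f : ZMod m × ZMod m → ZMod n}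
    (hsym : ∀ g₁ g₂ : ZMod m, f (g₁, g₂) = f (g₂, g₁)) (h0 : f (0, 0) = 0)
    (hc : ∀ g₁ g₂ g₃ : ZMod m,
      f (g₁, g₂) + f (g₁ + g₂, g₃) = f (g₂, g₃) + f (g₁, g₂ + g₃)) :
    ∀ (N : ℕ) (b : ZMod m), f ((N : ZMod m), b) = cS (fun k => f (1, k)) N b := by
  intro N
  induction N with
  | zero =>
      intro b
      simp only [Nat.cast_zero, cS, Finset.range_zero, Finset.sum_empty]
      rw [hsym]
      exact cocycle_zero h0 hc b
  | succ N ih =>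
      intro b
      have hcast : ((N + 1 : ℕ) : ZMod m) = 1 + (N : ZMod m) := by push_cast; ring
      rw [hcast]
      have hc1 := hc 1 ((N : ZMod m)) b
      have key : f (1 + (N : ZMod m), b)
          = f ((N : ZMod m), b) + f (1, (N : ZMod m) + b) - f (1, (N : ZMod m)) := by
        rw [eq_sub_iff_add_eq, add_comm (f (1 + (N : ZMod m), b)), ← hc1]
      rw [key, ih]
      show cS (fun k => f (1, k)) N b + f (1, (N : ZMod m) + b) - f (1, (N : ZMod m))
          = cS (fun k => f (1, k)) (N + 1) b
      unfold cS
      rw [Finset.sum_range_succ, add_comm ((N : ZMod m)) b]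
      ring

/-- The symmetric normalized 2-cocycles `f : ZMod m × ZMod m → ZMod n` (trivial action)
are in bijection with the functions `φ : ZMod m → ZMod n` with `φ 0 = 0`, via
`f ↦ (fun k => f (1, k))`. (Here `ZMod 0 = ℤ` covers the infinite cyclic case.) -/
theorem symmetric_cocycles_bijection (m n : ℕ) (hm : 2 ≤ m) :
    Set.BijOn (fun (f : ZMod m × ZMod m → ZMod n) => fun k : ZMod m => f (1, k))
      {f | (∀ g₁ g₂ : ZMod m, f (g₁, g₂) = f (g₂, g₁)) ∧ f (0, 0) = 0 ∧
        (∀ g₁ g₂ g₃ : ZMod m,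
          f (g₁, g₂) + f (g₁ + g₂, g₃) = f (g₂, g₃) + f (g₁, g₂ + g₃))}
      {φ : ZMod m → ZMod n | φ 0 = 0} := by
  haveI : NeZero m := ⟨by omega⟩
  haveI : Fact (1 < m) := ⟨hm⟩
  refine ⟨?_, ?_, ?_⟩
  · -- MapsTo
    rintro f ⟨hsym, h0, hc⟩
    show f (1, 0) = 0
    exact cocycle_zero h0 hc 1
  · -- InjOn
    rintro f ⟨hfsym, hf0, hfc⟩ g ⟨hgsym, hg0, hgc⟩ hfg
    have hfg' : (fun k => f (1, k)) = (fun k => g (1, k)) := hfg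
    funext p
    obtain ⟨a, b⟩ := p
    have ha : ((a.val : ℕ) : ZMod m) = a := ZMod.natCast_rightInverse a
    calc f (a, b) = f ((a.val : ZMod m), b) := by rw [ha]
      _ = cS (fun k => f (1, k)) a.val b := cocycle_eq hfsym hf0 hfc a.val b
      _ = cS (fun k => g (1, k)) a.val b := by rw [hfg']
      _ = g ((a.val : ZMod m), b) := (cocycle_eq hgsym hg0 hgc a.val b).symm
      _ = g (a, b) := by rw [ha]
  · -- SurjOn
    intro φ hφ
    have hφ0 : φ 0 = 0 := hφ
    refine ⟨fun p => cS φ p.1.val p.2, ⟨?_, ?_, ?_⟩, ?_⟩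
    · intro g₁ g₂; exact cS_symm φ g₁ g₂
    · show cS φ (0 : ZMod m).val 0 = 0
      simp [cS, ZMod.val_zero]
    · intro g₁ g₂ g₃; exact cS_cocycle φ g₁ g₂ g₃
    · funext k
      show cS φ (1 : ZMod m).val k = φ k
      rw [ZMod.val_one]
      simp [cS, hφ0]
end

section
/- Let m, n ≥ 2 be natural numbers and let f : ZMod m × ZMod m → ZMod n be a symmetric normalized 2-cocycle. Let S_m ∈ ZMod n be the sum S_m = Σ_{k=0}^{m−1} f(1, k). Then the twisted product group C_n ×^f C_m (the set ZMod n × ZMod m with multiplication (h₁, g₁)·(h₂, g₂) = (h₁ + h₂ + f(g₁, g₂), g₁ + g₂)) is a cyclic group if and only if gcd(s, gcd(m, n)) = 1, where s is any integer representative of S_m (this condition does not depend on the choice of representative). -/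
/-!
Put `a = (1, 0)` and `b = (0, 1)`. The group is abelian, `a` has order `n`, the second
coordinate is a homomorphism onto `ZMod m` that kills `a`, every element is `aⁱ bʲ`, and
`bᵐ = aˢ`. If a prime `p` divides `m`, `n` and `s`, then `(m / p) * n` kills every `aⁱ bʲ`, so
the exponent is smaller than the order `n m` and the group is not cyclic. Conversely, if
`gcd(s, m, n) = 1`, lifting the unit `s` of `ZMod (gcd m n)` to a unit of `ZMod n` gives `t` with
`s + m t` prime to `n`; then `c = aᵗ b` has `cᵐ = a^(s + m t)` of order `n`, while `m` divides
the order of `c`, so `c` has order `n m`.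
-/
open Multiplicative

theorem orderOf_zpow_of_isCoprime {G : Type*} [Group G] {a : G} {w : ℤ}
    (h : IsCoprime w (orderOf a)) : orderOf (a ^ w) = orderOf a := by
  refine orderOf_eq_orderOf_iff.mpr fun k => ?_
  rw [← zpow_natCast, ← zpow_mul, ← orderOf_dvd_iff_zpow_eq_one, ← orderOf_dvd_iff_pow_eq_one,
    ← Int.natCast_dvd_natCast]
  exact ⟨h.symm.dvd_of_dvd_mul_left, fun hk => dvd_mul_of_dvd_right hk w⟩

theorem Int.exists_isCoprime_add_mul {s : ℤ} {m n : ℕ} [NeZero n]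
    (h : IsCoprime s (Nat.gcd m n)) : ∃ t : ℤ, IsCoprime (s + m * t) n := by
  have hs : IsUnit (s : ZMod (Nat.gcd m n)) := (ZMod.coe_int_isUnit_iff_isCoprime _ _).mpr h.symm
  obtain ⟨u, hu⟩ := ZMod.unitsMap_surjective (Nat.gcd_dvd_right m n) hs.unit
  set v : ℤ := ((u : ZMod n).val : ℤ)
  have hvs : ((Nat.gcd m n : ℕ) : ℤ) ∣ v - s := by
    rw [← ZMod.intCast_eq_intCast_iff_dvd_sub]
    have := congrArg Units.val hu
    rw [ZMod.unitsMap_val, IsUnit.unit_spec, ZMod.cast_eq_val] at this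
    rw [← this, Int.cast_natCast]
  obtain ⟨k, hk⟩ := hvs
  refine ⟨Nat.gcdA m n * k, ?_⟩
  have hv : IsCoprime v n :=
    ((ZMod.coe_int_isUnit_iff_isCoprime v n).mp (by simp [v])).symm
  rw [Nat.gcd_eq_gcd_ab] at hk
  rw [show s + m * (Nat.gcdA m n * k) = v + n * (-(Nat.gcdB m n * k)) by linear_combination -hk]
  exact IsCoprime.add_mul_left_left_iff.mpr hv

section CyclicCriterion

variable {G : Type*} [CommGroup G] {a b : G} {m n : ℕ} {s : ℤ}

theorem pow_div_mul_eq_one_of_dvd (hgen : ∀ x : G, ∃ i j : ℕ, x = a ^ i * b ^ j)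
    (ha : a ^ n = 1) (hb : b ^ m = a ^ s) {p : ℕ} (hpm : p ∣ m) (hpn : p ∣ n) (hps : (p : ℤ) ∣ s)
    (x : G) : x ^ (m / p * n) = 1 := by
  obtain ⟨i, j, rfl⟩ := hgen x
  obtain ⟨m', rfl⟩ := hpm
  obtain ⟨n', rfl⟩ := hpn
  obtain ⟨s', rfl⟩ := hps
  rcases p.eq_zero_or_pos with rfl | hp
  · simp
  have ha' : a ^ (m' * (p * n')) = 1 := by rw [mul_comm, pow_mul, ha, one_pow]
  have hb' : b ^ (m' * (p * n')) = 1 := by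
    rw [show m' * (p * n') = p * m' * n' by ring, pow_mul, hb, ← zpow_natCast, ← zpow_mul,
      show (p : ℤ) * s' * n' = ((p * n' : ℕ) : ℤ) * s' by push_cast; ring, zpow_mul,
      zpow_natCast, ha, one_zpow]
  rw [Nat.mul_div_cancel_left _ hp, mul_pow, ← pow_mul, ← pow_mul, mul_comm i, mul_comm j,
    pow_mul a, pow_mul b, ha', hb', one_pow, one_pow, one_mul]

theorem not_isCyclic_of_prime_dvd [Finite G] (hgen : ∀ x : G, ∃ i j : ℕ, x = a ^ i * b ^ j)
    (ha : a ^ n = 1) (hb : b ^ m = a ^ s) (hcard : Nat.card G = n * m) {p : ℕ} (hp : p.Prime)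
    (hpm : p ∣ m) (hpn : p ∣ n) (hps : (p : ℤ) ∣ s) : ¬IsCyclic G := by
  intro hcyc
  have hexp : Monoid.exponent G ∣ m / p * n :=
    Monoid.exponent_dvd_of_forall_pow_eq_one (pow_div_mul_eq_one_of_dvd hgen ha hb hpm hpn hps)
  rw [IsCyclic.exponent_eq_card, hcard] at hexp
  obtain ⟨hn, hm⟩ := CanonicallyOrderedAdd.mul_pos.mp (hcard ▸ Nat.card_pos : 0 < n * m)
  have hlt : m / p < m := Nat.div_lt_self (by positivity) hp.one_lt
  have hpos : 0 < m / p := Nat.div_pos (Nat.le_of_dvd (by positivity) hpm) hp.pos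
  have hle := Nat.le_of_dvd (by positivity) hexp
  nlinarith

theorem isCyclic_of_isCoprime [Finite G] (π : G →* Multiplicative (ZMod m))
    (ha : orderOf a = n) (hπa : π a = 1) (hπb : π b = ofAdd 1) (hb : b ^ m = a ^ s)
    (hcard : Nat.card G = n * m) {t : ℤ} (hcop : IsCoprime (s + m * t) n) : IsCyclic G := by
  have hm : m ≠ 0 := (CanonicallyOrderedAdd.mul_pos.mp (hcard ▸ Nat.card_pos)).2.ne'
  set c := a ^ t * b
  have hcm : c ^ m = a ^ (s + m * t) := by
    rw [mul_pow, hb, ← zpow_natCast, ← zpow_mul, ← zpow_add, mul_comm, add_comm]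
  have hmc : m ∣ orderOf c := by
    have hπc : π c = ofAdd 1 := by simp [c, hπa, hπb]
    calc m = orderOf (π c) := by rw [hπc, orderOf_ofAdd_eq_addOrderOf, ZMod.addOrderOf_one]
      _ ∣ orderOf c := orderOf_map_dvd π c
  have hnc : orderOf (c ^ m) = n := by
    rw [hcm, orderOf_zpow_of_isCoprime (ha ▸ hcop), ha]
  rw [orderOf_pow_of_dvd hm hmc] at hnc
  refine isCyclic_of_orderOf_eq_card c ?_
  rw [hcard, ← hnc, Nat.div_mul_cancel hmc]

theorem isCyclic_iff_gcd_eq_one [Finite G] (π : G →* Multiplicative (ZMod m))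
    (hgen : ∀ x : G, ∃ i j : ℕ, x = a ^ i * b ^ j) (ha : orderOf a = n) (hπa : π a = 1)
    (hπb : π b = ofAdd 1) (hb : b ^ m = a ^ s) (hcard : Nat.card G = n * m) :
    IsCyclic G ↔ Int.gcd s (Nat.gcd m n : ℤ) = 1 := by
  have : NeZero n := ⟨(CanonicallyOrderedAdd.mul_pos.mp (hcard ▸ Nat.card_pos)).1.ne'⟩
  constructor
  · intro hcyc
    by_contra hne
    obtain ⟨p, hp, hps, hpmn⟩ := Nat.Prime.not_coprime_iff_dvd.mp hne
    refine not_isCyclic_of_prime_dvd hgen (ha ▸ pow_orderOf_eq_one a) hb hcard hp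
      (hpmn.trans (Nat.gcd_dvd_left m n)) (hpmn.trans (Nat.gcd_dvd_right m n))
      (Int.ofNat_dvd_left.mpr hps) hcyc
  · intro h
    obtain ⟨t, ht⟩ := Int.exists_isCoprime_add_mul (Int.isCoprime_iff_gcd_eq_one.mpr h)
    exact isCyclic_of_isCoprime π ha hπa hπb hb hcard ht

end CyclicCriterion

structure IsTwistedProduct {m n : ℕ} {G : Type*} [Group G] (f : ZMod m × ZMod m → ZMod n)
    (e : G ≃ ZMod n × ZMod m) : Prop where
  map_one : e 1 = (0, 0)
  map_mul : ∀ x y : G, e (x * y) = ((e x).1 + (e y).1 + f ((e x).2, (e y).2), (e x).2 + (e y).2)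

namespace IsTwistedProduct

variable {m n : ℕ} {G : Type*} [Group G] {f : ZMod m × ZMod m → ZMod n} {e : G ≃ ZMod n × ZMod m}

theorem cocycle_zero_left (he : IsTwistedProduct f e) (g : ZMod m) : f (0, g) = 0 := by
  have h := he.map_mul 1 (e.symm (0, g))
  rw [one_mul, he.map_one, e.apply_symm_apply] at h
  simpa using (congrArg Prod.fst h).symm

theorem mul_comm (he : IsTwistedProduct f e) (hsym : ∀ g₁ g₂ : ZMod m, f (g₁, g₂) = f (g₂, g₁))
    (x y : G) : x * y = y * x :=
  e.injective <| by rw [he.map_mul, he.map_mul, hsym, add_comm (e x).1, add_comm (e x).2]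

def inl (he : IsTwistedProduct f e) : Multiplicative (ZMod n) →* G :=
  MonoidHom.mk' (fun h => e.symm (h.toAdd, 0)) fun h₁ h₂ =>
    e.injective <| by simp [he.map_mul, he.cocycle_zero_left]

theorem apply_inl (he : IsTwistedProduct f e) (h : Multiplicative (ZMod n)) :
    e (he.inl h) = (h.toAdd, 0) :=
  e.apply_symm_apply _

theorem inl_injective (he : IsTwistedProduct f e) : Function.Injective he.inl := fun h₁ h₂ h =>
  by simpa [apply_inl] using congrArg e h

def snd (he : IsTwistedProduct f e) : G →* Multiplicative (ZMod m) :=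
  MonoidHom.mk' (fun x => ofAdd (e x).2) fun x y => by simp [he.map_mul]

theorem apply_pow_symm_zero_one (he : IsTwistedProduct f e) (k : ℕ) :
    e (e.symm (0, 1) ^ k) = (∑ j ∈ Finset.range k, f (1, (j : ZMod m)), (k : ZMod m)) := by
  induction k with
  | zero => simpa using he.map_one
  | succ k ih =>
    rw [pow_succ', he.map_mul, ih, e.apply_symm_apply, Finset.sum_range_succ]
    simp [add_comm]

theorem exists_eq_pow_mul_pow (he : IsTwistedProduct f e) [NeZero n] [NeZero m] (x : G) :
    ∃ i j : ℕ, x = he.inl (ofAdd 1) ^ i * e.symm (0, 1) ^ j := by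
  refine ⟨((e x).1 - ∑ j ∈ Finset.range (e x).2.val, f (1, (j : ZMod m))).val, (e x).2.val, ?_⟩
  apply e.injective
  rw [← map_pow, ← ofAdd_nsmul, he.map_mul, apply_inl, he.apply_pow_symm_zero_one,
    he.cocycle_zero_left]
  simp

theorem orderOf_inl_ofAdd_one (he : IsTwistedProduct f e) : orderOf (he.inl (ofAdd 1)) = n := by
  rw [orderOf_injective _ he.inl_injective, orderOf_ofAdd_eq_addOrderOf, ZMod.addOrderOf_one]

theorem pow_symm_zero_one_eq_zpow (he : IsTwistedProduct f e) {s : ℤ}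
    (hs : (s : ZMod n) = ∑ k ∈ Finset.range m, f (1, (k : ZMod m))) :
    e.symm (0, 1) ^ m = he.inl (ofAdd 1) ^ s := by
  apply e.injective
  rw [← map_zpow, ← ofAdd_zsmul, apply_inl, he.apply_pow_symm_zero_one, ZMod.natCast_self, ← hs]
  simp

end IsTwistedProduct

theorem twisted_product_of_finite_cyclics_isCyclic_iff_general
    (m n : ℕ) (hm : 2 ≤ m) (hn : 2 ≤ n)
    (f : ZMod m × ZMod m → ZMod n)
    (hsym : ∀ g₁ g₂ : ZMod m, f (g₁, g₂) = f (g₂, g₁))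
    (G : Type*) [Group G] (e : G ≃ ZMod n × ZMod m)
    (hone : e 1 = (0, 0))
    (hmul : ∀ x y : G,
      e (x * y) = ((e x).1 + (e y).1 + f ((e x).2, (e y).2), (e x).2 + (e y).2))
    (s : ℤ) (hs : (s : ZMod n) = ∑ k ∈ Finset.range m, f (1, (k : ZMod m))) :
    IsCyclic G ↔ Int.gcd s (Nat.gcd m n : ℤ) = 1 := by
  have : NeZero m := ⟨by omega⟩
  have : NeZero n := ⟨by omega⟩
  have : Finite G := .of_equiv _ e.symm
  have he : IsTwistedProduct f e := ⟨hone, hmul⟩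
  let : CommGroup G := { mul_comm := he.mul_comm hsym }
  have hcard : Nat.card G = n * m := by
    rw [Nat.card_congr e, Nat.card_prod, Nat.card_zmod, Nat.card_zmod]
  exact isCyclic_iff_gcd_eq_one he.snd he.exists_eq_pow_mul_pow he.orderOf_inl_ofAdd_one
    (by simp [IsTwistedProduct.snd, IsTwistedProduct.apply_inl])
    (by simp [IsTwistedProduct.snd]) (he.pow_symm_zero_one_eq_zpow hs) hcard

/-- The twisted product `ZMod n ×^f ZMod m` of two finite cyclic groups along a symmetric
normalized 2-cocycle `f` is cyclic iff `gcd(s, gcd(m, n)) = 1` for any integer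
representative `s` of `S_m = ∑_{k=0}^{m-1} f(1, k)`. -/
theorem twisted_product_of_finite_cyclics_isCyclic_iff
    (m n : ℕ) (hm : 2 ≤ m) (hn : 2 ≤ n)
    (f : ZMod m × ZMod m → ZMod n)
    (hsym : ∀ g₁ g₂ : ZMod m, f (g₁, g₂) = f (g₂, g₁))
    (hnorm : f (0, 0) = 0)
    (hcoc : ∀ g₁ g₂ g₃ : ZMod m,
      f (g₁, g₂) + f (g₁ + g₂, g₃) = f (g₂, g₃) + f (g₁, g₂ + g₃))
    (G : Type*) [Group G] (e : G ≃ ZMod n × ZMod m)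
    (hone : e 1 = (0, 0))
    (hmul : ∀ x y : G,
      e (x * y) = ((e x).1 + (e y).1 + f ((e x).2, (e y).2), (e x).2 + (e y).2))
    (s : ℤ) (hs : (s : ZMod n) = ∑ k ∈ Finset.range m, f (1, (k : ZMod m))) :
    IsCyclic G ↔ Int.gcd s (Nat.gcd m n : ℤ) = 1 :=
  twisted_product_of_finite_cyclics_isCyclic_iff_general m n hm hn f hsym G e hone hmul s hs
end

section
/- Let m ≥ 2 be a natural number and let f : ZMod m × ZMod m → ℤ be a symmetric normalized 2-cocycle with values in ℤ. Let S_m ∈ ℤ be the sum S_m = Σ_{k=0}^{m−1} f(1, k). Then the twisted product group C_g ×^f C_m (the set ℤ × ZMod m with multiplication (h₁, g₁)·(h₂, g₂) = (h₁ + h₂ + f(g₁, g₂), g₁ + g₂)) is a cyclic group if and only if gcd(S_m, m) = 1. -/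
/-!
The group `G` is abelian, generated by `t = e⁻¹ (1, 0)` and `a = e⁻¹ (0, 1)`, and
`a ^ m = t ^ S`.
If `u S + v m = 1`, then `a ^ u * t ^ v` generates `G`: its `m`-th power is `t` and its `S`-th
power is `a`. Conversely, `G` is infinite, and an infinite cyclic group is torsion-free, so
`a ^ m = t ^ S` forces `a ^ (m / d) = t ^ (S / d)` for `d = gcd S m`; comparing the `ZMod m`
coordinates gives `m ∣ m / d`, hence `d = 1`.
-/

open Finset

theorem IsCyclic.isMulTorsionFree {G : Type*} [Group G] [IsCyclic G] [Infinite G] :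
    IsMulTorsionFree G :=
  intCyclicMulEquiv.symm.injective.isMulTorsionFree intCyclicMulEquiv.symm.toMonoidHom

theorem pow_div_eq_zpow_ediv {G : Type*} [Group G] [IsMulTorsionFree G] {a t : G} {m d : ℕ}
    {S : ℤ} (hd : d ≠ 0) (hdm : d ∣ m) (hdS : (d : ℤ) ∣ S) (h : a ^ m = t ^ S) :
    a ^ (m / d) = t ^ (S / d) := by
  apply pow_left_injective hd
  change (a ^ (m / d)) ^ d = (t ^ (S / d)) ^ d
  rw [← pow_mul, Nat.div_mul_cancel hdm, ← zpow_natCast (t ^ _), ← zpow_mul,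
    Int.ediv_mul_cancel hdS, h]

theorem isCyclic_of_closure_pair_eq_top {G : Type*} [CommGroup G] {t a : G}
    (hgen : Subgroup.closure {t, a} = ⊤) {m S : ℤ} (h : a ^ m = t ^ S) (hcop : IsCoprime S m) :
    IsCyclic G := by
  obtain ⟨u, v, huv⟩ := hcop
  have hsplit (g : G) : g = g ^ (u * S) * g ^ (v * m) := by rw [← zpow_add, huv, zpow_one]
  refine isCyclic_iff_exists_zpowers_eq_top.mpr ⟨a ^ u * t ^ v, eq_top_iff.mpr ?_⟩
  rw [← hgen, Subgroup.closure_le, Set.insert_subset_iff, Set.singleton_subset_iff]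
  constructor
  · refine ⟨m, ?_⟩
    calc (a ^ u * t ^ v) ^ m = a ^ (m * u) * t ^ (v * m) := by
          rw [mul_zpow, ← zpow_mul, ← zpow_mul, mul_comm u]
      _ = t ^ (u * S) * t ^ (v * m) := by rw [zpow_mul, h, ← zpow_mul, mul_comm S]
      _ = t := (hsplit t).symm
  · refine ⟨S, ?_⟩
    calc (a ^ u * t ^ v) ^ S = a ^ (u * S) * t ^ (S * v) := by
          rw [mul_zpow, ← zpow_mul, ← zpow_mul, mul_comm v]
      _ = a ^ (u * S) * a ^ (v * m) := by rw [zpow_mul t, ← h, ← zpow_mul, mul_comm m]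
      _ = a := (hsplit a).symm

theorem Nat.eq_one_of_natCast_div_eq_zero {m d : ℕ} (hm : m ≠ 0) (hdm : d ∣ m)
    (h : ((m / d : ℕ) : ZMod m) = 0) : d = 1 := by
  have hpos : 0 < m / d :=
    Nat.div_pos (Nat.le_of_dvd (by omega) hdm) (Nat.pos_of_dvd_of_pos hdm (by omega))
  have hle : m ≤ m / d := Nat.le_of_dvd hpos ((ZMod.natCast_eq_zero_iff _ _).mp h)
  have := (Nat.div_eq_self.mp (le_antisymm (Nat.div_le_self m d) hle))
  omega

structure IsTwistedProductEquiv {A G : Type*} [AddMonoid A] [Group G] (f : A × A → ℤ)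
    (e : G ≃ ℤ × A) : Prop where
  map_one : e 1 = (0, 0)
  map_mul : ∀ x y : G, e (x * y) = ((e x).1 + (e y).1 + f ((e x).2, (e y).2), (e x).2 + (e y).2)

namespace IsTwistedProductEquiv

variable {A G : Type*} [Group G] {f : A × A → ℤ} {e : G ≃ ℤ × A}

section AddMonoid

variable [AddMonoid A] (he : IsTwistedProductEquiv f e)
include he

theorem symm_mul_symm (p q : ℤ) (g₁ g₂ : A) :
    e.symm (p, g₁) * e.symm (q, g₂) = e.symm (p + q + f (g₁, g₂), g₁ + g₂) :=
  e.eq_symm_apply.mpr (by simp [he.map_mul])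

theorem symm_zero : e.symm (0, 0) = 1 :=
  e.symm_apply_eq.mpr he.map_one.symm

theorem cocycle_zero_left (g : A) : f (0, g) = 0 := by
  have h := congrArg Prod.fst (he.map_mul 1 (e.symm (0, g)))
  simpa [he.map_one] using h.symm

def inl : Multiplicative ℤ →* G where
  toFun p := e.symm (p.toAdd, 0)
  map_one' := he.symm_zero
  map_mul' p q := by rw [he.symm_mul_symm, he.cocycle_zero_left, add_zero, add_zero]; rfl

theorem zpow_symm_inl (p n : ℤ) : e.symm (p, 0) ^ n = e.symm (n * p, 0) := by
  simpa [inl] using (map_zpow he.inl (.ofAdd p) n).symm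

theorem pow_symm_inr (g : A) (k : ℕ) :
    e.symm (0, g) ^ k = e.symm (∑ j ∈ range k, f (g, j • g), k • g) := by
  induction k with
  | zero => simpa using he.symm_zero.symm
  | succ k ih => rw [pow_succ', ih, he.symm_mul_symm, sum_range_succ, succ_nsmul', zero_add]

end AddMonoid

theorem mul_comm [AddCommMonoid A] (he : IsTwistedProductEquiv f e)
    (hsym : ∀ g₁ g₂ : A, f (g₁, g₂) = f (g₂, g₁)) (x y : G) : x * y = y * x :=
  e.injective (by rw [he.map_mul, he.map_mul, hsym, Int.add_comm (e x).1, add_comm (e x).2])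

theorem closure_symm_eq_top {m : ℕ} [NeZero m] {f : ZMod m × ZMod m → ℤ}
    {e : G ≃ ℤ × ZMod m} (he : IsTwistedProductEquiv f e) :
    Subgroup.closure {e.symm (1, 0), e.symm (0, 1)} = ⊤ := by
  refine eq_top_iff.mpr fun z _ => ?_
  rw [← e.symm_apply_apply z]
  generalize e z = x
  obtain ⟨p, g⟩ := x
  have hz : e.symm (p, g) =
      e.symm (1, 0) ^ (p - ∑ j ∈ range g.val, f (1, j • 1)) * e.symm (0, 1) ^ g.val := by
    rw [he.zpow_symm_inl, he.pow_symm_inr, he.symm_mul_symm, he.cocycle_zero_left]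
    simp
  rw [hz]
  exact mul_mem (zpow_mem (Subgroup.subset_closure (by simp)) _)
    (pow_mem (Subgroup.subset_closure (by simp)) _)

end IsTwistedProductEquiv

theorem twisted_product_infinite_cyclic_isCyclic_iff_general
    (m : ℕ) (hm : 2 ≤ m)
    (f : ZMod m × ZMod m → ℤ)
    (hsym : ∀ g₁ g₂ : ZMod m, f (g₁, g₂) = f (g₂, g₁))
    (G : Type*) [Group G] (e : G ≃ ℤ × ZMod m)
    (hone : e 1 = (0, 0))
    (hmul : ∀ x y : G,
      e (x * y) = ((e x).1 + (e y).1 + f ((e x).2, (e y).2), (e x).2 + (e y).2)) :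
    IsCyclic G ↔ Int.gcd (∑ k ∈ Finset.range m, f (1, (k : ZMod m))) m = 1 := by
  have he : IsTwistedProductEquiv f e := ⟨hone, hmul⟩
  have : NeZero m := ⟨by omega⟩
  let : CommGroup G := { ‹Group G› with mul_comm := he.mul_comm hsym }
  set S := ∑ k ∈ range m, f (1, (k : ZMod m))
  have ham : e.symm (0, 1) ^ m = e.symm (1, 0) ^ S := by
    simp [S, he.pow_symm_inr, he.zpow_symm_inl]
  constructor
  · intro _
    have : Infinite G := Infinite.of_injective e.symm e.symm.injective
    have : IsMulTorsionFree G := IsCyclic.isMulTorsionFree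
    have hdm : Int.gcd S m ∣ m := Int.natCast_dvd_natCast.mp (Int.gcd_dvd_right S m)
    have hd : Int.gcd S m ≠ 0 := by
      rw [Ne, Int.gcd_eq_zero_iff]
      omega
    have h := pow_div_eq_zpow_ediv hd hdm (Int.gcd_dvd_left S m) ham
    refine Nat.eq_one_of_natCast_div_eq_zero (by omega) hdm ?_
    simpa [he.pow_symm_inr, he.zpow_symm_inl] using congrArg (fun x => (e x).2) h
  · intro hgcd
    exact isCyclic_of_closure_pair_eq_top he.closure_symm_eq_top (by exact_mod_cast ham)
      (Int.isCoprime_iff_gcd_eq_one.mpr hgcd)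

/-- The twisted product `ℤ ×^f ZMod m` of the infinite cyclic group and a finite cyclic
group along a symmetric normalized 2-cocycle `f` is cyclic iff `gcd(S_m, m) = 1`, where
`S_m = ∑_{k=0}^{m-1} f(1, k)`. -/
theorem twisted_product_infinite_cyclic_isCyclic_iff
    (m : ℕ) (hm : 2 ≤ m)
    (f : ZMod m × ZMod m → ℤ)
    (hsym : ∀ g₁ g₂ : ZMod m, f (g₁, g₂) = f (g₂, g₁))
    (hnorm : f (0, 0) = 0)
    (hcoc : ∀ g₁ g₂ g₃ : ZMod m,
      f (g₁, g₂) + f (g₁ + g₂, g₃) = f (g₂, g₃) + f (g₁, g₂ + g₃))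
    (G : Type*) [Group G] (e : G ≃ ℤ × ZMod m)
    (hone : e 1 = (0, 0))
    (hmul : ∀ x y : G,
      e (x * y) = ((e x).1 + (e y).1 + f ((e x).2, (e y).2), (e x).2 + (e y).2)) :
    IsCyclic G ↔ Int.gcd (∑ k ∈ Finset.range m, f (1, (k : ZMod m))) m = 1 :=
  twisted_product_infinite_cyclic_isCyclic_iff_general m hm f hsym G e hone hmul
end

section
/- Let m, n ≥ 2 be natural numbers and let f : ZMod m × ZMod m → ZMod n be a symmetric normalized 2-cocycle. Let i be the unique integer with 0 ≤ i < n representing the class S_m = Σ_{k=0}^{m−1} f(1, k) in ZMod n. Then the twisted product group ZMod n ×^f ZMod m is isomorphic to the presented group ⟨a, b ∣ a^n, b^m·a^(−i), a·b·a^(−1)·b^(−1)⟩. -/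
/-!
In `G`, the element `A = e⁻¹(1, 0)` is central with `Aⁿ = 1`, and `B = e⁻¹(0, 1)` satisfies
`e(Bᵗ) = (∑_{k<t} f(1, k), t)`, so `Bᵐ = Aⁱ`. Hence `a ↦ A`, `b ↦ B` defines a homomorphism `ψ`
out of the presented group. There `a` and `b` commute, so every element is `aˢ bᵗ` with
`0 ≤ s < n`, `0 ≤ t < m`; as `e(Aˢ Bᵗ) = (s + ∑_{k<t} f(1, k), t)`, the map `ψ` is injective on
these normal forms and onto `G`.
-/

theorem zpow_eq_pow_val {H : Type*} [Group H] {n : ℕ} [NeZero n] {a : H} (ha : a ^ n = 1)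
    (z : ℤ) : a ^ z = a ^ (z : ZMod n).val := by
  conv_lhs => rw [← Int.emod_add_mul_ediv z n]
  rw [zpow_add, zpow_mul, zpow_natCast, ha, one_zpow, mul_one, ← ZMod.val_intCast, zpow_natCast]

theorem exists_pow_val_mul_pow_val_eq {H : Type*} [Group H] {m n : ℕ} [NeZero m] [NeZero n]
    {i : ℤ} {a b : H} (ha : a ^ n = 1) (hb : b ^ m = a ^ i) (hab : Commute a b) (s t : ℤ) :
    ∃ u : ZMod n × ZMod m, a ^ u.1.val * b ^ u.2.val = a ^ s * b ^ t := by
  refine ⟨((s + i * (t / m) : ℤ), (t : ZMod m)), ?_⟩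
  have hbt : b ^ t = a ^ (i * (t / m)) * b ^ (t : ZMod m).val := by
    conv_lhs => rw [← Int.emod_add_mul_ediv t m]
    rw [zpow_add, zpow_mul, zpow_natCast, hb, ← zpow_mul, ← ZMod.val_intCast, zpow_natCast,
      ((hab.zpow_left _).pow_right _).eq]
  rw [← zpow_eq_pow_val ha, hbt, zpow_add, mul_assoc]

theorem bijective_add_shear {K Q : Type*} [AddGroup K] (c : Q → K) :
    Function.Bijective fun u : K × Q => (u.1 + c u.2, u.2) :=
  Function.bijective_iff_has_inverse.2
    ⟨fun u => (u.1 - c u.2, u.2), fun u => by simp, fun u => by simp⟩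

def abelianExtensionRels (m n : ℕ) (i : ℤ) : Set (FreeGroup (Fin 2)) :=
  {FreeGroup.of 0 ^ n,
    FreeGroup.of 1 ^ m * FreeGroup.of 0 ^ (-i),
    FreeGroup.of 0 * FreeGroup.of 1 * (FreeGroup.of 0)⁻¹ * (FreeGroup.of 1)⁻¹}

namespace abelianExtensionRels

variable {m n : ℕ} {i : ℤ}

theorem lift_eq_one {H : Type*} [Group H] {a b : H} (ha : a ^ n = 1) (hb : b ^ m = a ^ i)
    (hab : Commute a b) : ∀ r ∈ abelianExtensionRels m n i, FreeGroup.lift ![a, b] r = 1 := by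
  rintro r (rfl | rfl | rfl) <;> simp [ha, hb, hab.eq]

local notation "P" => PresentedGroup (abelianExtensionRels m n i)

theorem of_zero_pow : (PresentedGroup.of 0 : P) ^ n = 1 := by
  have h := PresentedGroup.one_of_mem (rels := abelianExtensionRels m n i) (Set.mem_insert _ _)
  rw [map_pow] at h
  exact h

theorem of_one_pow : (PresentedGroup.of 1 : P) ^ m = PresentedGroup.of 0 ^ i := by
  have h := PresentedGroup.one_of_mem (rels := abelianExtensionRels m n i)
    (Set.mem_insert_of_mem _ (Set.mem_insert _ _))
  rw [map_mul, map_pow, map_zpow, zpow_neg, mul_inv_eq_one] at h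
  exact h

theorem commute_of_zero_of_one : Commute (PresentedGroup.of 0 : P) (PresentedGroup.of 1) := by
  have h := PresentedGroup.one_of_mem (rels := abelianExtensionRels m n i)
    (Set.mem_insert_of_mem _ (Set.mem_insert_of_mem _ rfl))
  simp only [map_mul, map_inv, mul_inv_eq_iff_eq_mul] at h
  exact h

end abelianExtensionRels

theorem PresentedGroup.exists_zpow_mul_zpow_eq {rels : Set (FreeGroup (Fin 2))}
    (h : Commute (of 0 : PresentedGroup rels) (of 1)) (x : PresentedGroup rels) :
    ∃ s t : ℤ, of 0 ^ s * of 1 ^ t = x := by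
  let φ := (zpowersHom _ (of 0 : PresentedGroup rels)).noncommCoprod (zpowersHom _ (of 1))
    fun s t => (h.zpow_left _).zpow_right _
  obtain ⟨⟨s, t⟩, hst⟩ : x ∈ φ.range := generated_by rels φ.range
    (Fin.forall_fin_two.2 ⟨⟨(.ofAdd 1, 1), (MonoidHom.noncommCoprod_apply ..).trans (by simp)⟩,
      ⟨(1, .ofAdd 1), (MonoidHom.noncommCoprod_apply ..).trans (by simp)⟩⟩) x
  exact ⟨s.toAdd, t.toAdd, hst⟩

/-- `e` identifies `G` with the twisted product `K ×^f Q`. -/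
structure IsTwistedProduct_s10 {K Q G : Type*} [AddCommGroup K] [AddGroup Q] [Group G]
    (f : Q × Q → K) (e : G ≃ K × Q) : Prop where
  map_one : e 1 = (0, 0)
  map_mul : ∀ x y : G, e (x * y) = ((e x).1 + (e y).1 + f ((e x).2, (e y).2), (e x).2 + (e y).2)

namespace IsTwistedProduct_s10

variable {K Q G : Type*} [AddCommGroup K] [AddGroup Q] [Group G]
  {f : Q × Q → K} {e : G ≃ K × Q}

theorem cocycle_zero_left_s10 (h : IsTwistedProduct_s10 f e) (g : Q) : f (0, g) = 0 := by
  simpa [h.map_one, eq_comm] using congrArg Prod.fst (h.map_mul 1 (e.symm (0, g)))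

theorem cocycle_zero_right (h : IsTwistedProduct_s10 f e) (g : Q) : f (g, 0) = 0 := by
  simpa [h.map_one, eq_comm] using congrArg Prod.fst (h.map_mul (e.symm (0, g)) 1)

theorem apply_symm_inl_mul (h : IsTwistedProduct_s10 f e) (x : K) (y : G) :
    e (e.symm (x, 0) * y) = (x + (e y).1, (e y).2) := by
  simp [h.map_mul, h.cocycle_zero_left_s10]

theorem apply_mul_symm_inl (h : IsTwistedProduct_s10 f e) (x : K) (y : G) :
    e (y * e.symm (x, 0)) = (x + (e y).1, (e y).2) := by
  simp [h.map_mul, h.cocycle_zero_right, add_comm]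

theorem symm_inl_mem_center (h : IsTwistedProduct_s10 f e) (x : K) :
    e.symm (x, 0) ∈ Subgroup.center G :=
  Subgroup.mem_center_iff.2 fun y =>
    e.injective <| by rw [h.apply_mul_symm_inl, h.apply_symm_inl_mul]

theorem apply_symm_inl_pow_mul (h : IsTwistedProduct_s10 f e) (x : K) (k : ℕ) (y : G) :
    e (e.symm (x, 0) ^ k * y) = (k • x + (e y).1, (e y).2) := by
  induction k with
  | zero => simp
  | succ k ih => rw [pow_succ', mul_assoc, h.apply_symm_inl_mul, ih, succ_nsmul', add_assoc]

theorem apply_symm_inl_pow (h : IsTwistedProduct_s10 f e) (x : K) (k : ℕ) :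
    e (e.symm (x, 0) ^ k) = (k • x, 0) := by
  simpa [h.map_one] using h.apply_symm_inl_pow_mul x k 1

theorem apply_symm_inr_pow (h : IsTwistedProduct_s10 f e) (g : Q) (k : ℕ) :
    e (e.symm (0, g) ^ k) = (∑ j ∈ Finset.range k, f (g, j • g), k • g) := by
  induction k with
  | zero => simpa using h.map_one
  | succ k ih =>
    rw [pow_succ', h.map_mul, ih, Finset.sum_range_succ, succ_nsmul']
    simp [add_comm]

end IsTwistedProduct_s10

theorem twisted_product_iso_presented_group_general
    (m n : ℕ) (hm : 2 ≤ m) (hn : 2 ≤ n)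
    (f : ZMod m × ZMod m → ZMod n)
    (G : Type*) [Group G] (e : G ≃ ZMod n × ZMod m)
    (hone : e 1 = (0, 0))
    (hmul : ∀ x y : G,
      e (x * y) = ((e x).1 + (e y).1 + f ((e x).2, (e y).2), (e x).2 + (e y).2))
    (i : ℤ)
    (hi : (i : ZMod n) = ∑ k ∈ Finset.range m, f (1, (k : ZMod m))) :
    Nonempty (G ≃* PresentedGroup
      ({FreeGroup.of 0 ^ n,
        FreeGroup.of 1 ^ m * FreeGroup.of 0 ^ (-i),
        FreeGroup.of 0 * FreeGroup.of 1 * (FreeGroup.of 0)⁻¹ * (FreeGroup.of 1)⁻¹} :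
        Set (FreeGroup (Fin 2)))) := by
  have : NeZero m := ⟨by omega⟩
  have : NeZero n := ⟨by omega⟩
  have h : IsTwistedProduct_s10 f e := ⟨hone, hmul⟩
  have hA : e.symm (1, 0) ^ n = 1 := e.injective <| by simp [h.apply_symm_inl_pow, hone]
  have hB : e.symm (0, 1) ^ m = e.symm (1, 0) ^ i := e.injective <| by
    simp [zpow_eq_pow_val hA, h.apply_symm_inl_pow, h.apply_symm_inr_pow, hi]
  have hAB : Commute (e.symm (1, 0)) (e.symm (0, 1)) := (h.symm_inl_mem_center 1).comm _
  let ψ := PresentedGroup.toGroup (abelianExtensionRels.lift_eq_one hA hB hAB)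
  let φ (u : ZMod n × ZMod m) : PresentedGroup (abelianExtensionRels m n i) :=
    .of 0 ^ u.1.val * .of 1 ^ u.2.val
  have hφ : Function.Surjective φ := fun x => by
    open abelianExtensionRels in
    obtain ⟨s, t, rfl⟩ := PresentedGroup.exists_zpow_mul_zpow_eq commute_of_zero_of_one x
    exact exists_pow_val_mul_pow_val_eq of_zero_pow of_one_pow commute_of_zero_of_one s t
  let S (g : ZMod m) : ZMod n := ∑ k ∈ Finset.range g.val, f (1, k)
  have hψφ : ψ ∘ φ = e.symm ∘ fun u => (u.1 + S u.2, u.2) := by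
    ext1 u
    simp [e.eq_symm_apply, ψ, φ, S, PresentedGroup.toGroup.of, h.apply_symm_inl_pow_mul,
      h.apply_symm_inr_pow]
  have hbij : Function.Bijective (ψ ∘ φ) := hψφ ▸ e.symm.bijective.comp (bijective_add_shear S)
  exact ⟨(MulEquiv.ofBijective ψ ⟨hbij.1.of_comp_right hφ, hbij.2.of_comp⟩).symm⟩

/-- The twisted product `ZMod n ×^f ZMod m` is isomorphic to the presented group
`⟨a, b ∣ aⁿ, bᵐ a⁻ⁱ, ab = ba⟩`, where `i` is the representative in `{0, …, n-1}` of
`S_m = ∑_{k=0}^{m-1} f(1, k)`. -/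
theorem twisted_product_iso_presented_group
    (m n : ℕ) (hm : 2 ≤ m) (hn : 2 ≤ n)
    (f : ZMod m × ZMod m → ZMod n)
    (hsym : ∀ g₁ g₂ : ZMod m, f (g₁, g₂) = f (g₂, g₁))
    (hnorm : f (0, 0) = 0)
    (hcoc : ∀ g₁ g₂ g₃ : ZMod m,
      f (g₁, g₂) + f (g₁ + g₂, g₃) = f (g₂, g₃) + f (g₁, g₂ + g₃))
    (G : Type*) [Group G] (e : G ≃ ZMod n × ZMod m)
    (hone : e 1 = (0, 0))
    (hmul : ∀ x y : G,
      e (x * y) = ((e x).1 + (e y).1 + f ((e x).2, (e y).2), (e x).2 + (e y).2))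
    (i : ℤ) (hi0 : 0 ≤ i) (hin : i < n)
    (hi : (i : ZMod n) = ∑ k ∈ Finset.range m, f (1, (k : ZMod m))) :
    Nonempty (G ≃* PresentedGroup
      ({FreeGroup.of 0 ^ n,
        FreeGroup.of 1 ^ m * FreeGroup.of 0 ^ (-i),
        FreeGroup.of 0 * FreeGroup.of 1 * (FreeGroup.of 0)⁻¹ * (FreeGroup.of 1)⁻¹} :
        Set (FreeGroup (Fin 2)))) :=
  twisted_product_iso_presented_group_general m n hm hn f G e hone hmul i hi
end

section
/- Let n ≥ 2 be a natural number and t an integer with gcd(t, n) = 1. Then the presented group ⟨a, g ∣ a^n, g^(−1)·a·g·a^(−t)⟩ is not a cyclic group (it is an infinite group containing an element of finite order n > 1). -/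
/-!
Since `t` is a unit modulo `n`, sending `a` to the generator of `ZMod n` and `g` to the generator
of `ℤ` defines a homomorphism to `ZMod n ⋊ ℤ`, where `ℤ` acts through multiplication by `t⁻¹`.
There `a` has order exactly `n` and `g` has infinite order, so the presented group is infinite and
has nontrivial torsion; an infinite cyclic group is `ℤ`, which is torsion-free.
-/

open Multiplicative SemidirectProduct

theorem IsCyclic.isMulTorsionFree_of_infinite (G : Type*) [Group G] [IsCyclic G] [Infinite G] :
    IsMulTorsionFree G :=
  intCyclicMulEquiv.symm.injective.isMulTorsionFree (intCyclicMulEquiv (G := G)).symm.toMonoidHom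

theorem not_isCyclic_of_two_le_orderOf {G : Type*} [Group G] [Infinite G] {x : G}
    (hx : 2 ≤ orderOf x) : ¬ IsCyclic G := by
  intro _
  have := IsCyclic.isMulTorsionFree_of_infinite G
  have hfin : IsOfFinOrder x := orderOf_pos_iff.mp (by omega)
  rw [isOfFinOrder_iff_eq_one] at hfin
  simp [hfin] at hx

theorem Infinite.of_not_isOfFinOrder {G : Type*} [Group G] {x : G} (hx : ¬ IsOfFinOrder x) :
    Infinite G :=
  not_finite_iff_infinite.mp fun _ ↦ hx (isOfFinOrder_of_finite x)

namespace ZMod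

variable {n : ℕ} (u : (ZMod n)ˣ)

-- `u⁻¹` rather than `u`, so that conjugating by the generator of `ℤ` from the right multiplies
-- by `u`, matching the relator `g⁻¹ a g a⁻ᵗ`.
def unitPowAction : Multiplicative ℤ →* MulAut (Multiplicative (ZMod n)) :=
  zpowersHom _ (AddEquiv.toMultiplicative (AddAut.mulLeft u⁻¹))

variable {u}

theorem inr_inv_mul_inl_mul_inr (x : ZMod n) :
    (inr (ofAdd 1))⁻¹ * inl (ofAdd x) * inr (ofAdd 1) =
      (inl (ofAdd (u * x)) : Multiplicative (ZMod n) ⋊[unitPowAction u] Multiplicative ℤ) := by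
  rw [← map_inv, ← inl_aut_inv]
  rfl

theorem inl_ofAdd_one_pow :
    (inl (ofAdd 1) : Multiplicative (ZMod n) ⋊[unitPowAction u] Multiplicative ℤ) ^ n = 1 := by
  rw [← map_pow, ← ofAdd_nsmul, nsmul_one, ZMod.natCast_self, ofAdd_zero, map_one]

theorem orderOf_inl_ofAdd_one :
    orderOf (inl (ofAdd 1) : Multiplicative (ZMod n) ⋊[unitPowAction u] Multiplicative ℤ) = n := by
  rw [orderOf_injective _ inl_injective, orderOf_ofAdd_eq_addOrderOf, ZMod.addOrderOf_one]

theorem not_isOfFinOrder_inr_ofAdd_one :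
    ¬ IsOfFinOrder (inr (ofAdd 1) : Multiplicative (ZMod n) ⋊[unitPowAction u] Multiplicative ℤ) := by
  intro h
  have h' := rightHom.isOfFinOrder h
  rw [rightHom_inr] at h'
  exact not_isOfFinOrder_of_isMulTorsionFree (by simp) h'

end ZMod

def metacyclicRelators (n : ℕ) (t : ℤ) : Set (FreeGroup (Fin 2)) :=
  {FreeGroup.of 0 ^ n, (FreeGroup.of 1)⁻¹ * FreeGroup.of 0 * FreeGroup.of 1 * FreeGroup.of 0 ^ (-t)}

namespace metacyclicRelators

variable {n : ℕ} {t : ℤ} {u : (ZMod n)ˣ}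

theorem of_zero_pow : (PresentedGroup.of 0 : PresentedGroup (metacyclicRelators n t)) ^ n = 1 := by
  rw [PresentedGroup.of, ← map_pow]
  exact PresentedGroup.one_of_mem (Set.mem_insert _ _)

def toSemidirectProduct (hu : (t : ZMod n) = u) :
    PresentedGroup (metacyclicRelators n t) →*
      Multiplicative (ZMod n) ⋊[ZMod.unitPowAction u] Multiplicative ℤ :=
  PresentedGroup.toGroup (f := ![inl (ofAdd 1), inr (ofAdd 1)]) <| by
    rintro r (rfl | rfl)
    · rw [map_pow, FreeGroup.lift_apply_of, Matrix.cons_val_zero, ZMod.inl_ofAdd_one_pow]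
    · simp only [map_mul, map_inv, map_zpow, FreeGroup.lift_apply_of, Matrix.cons_val_zero,
        Matrix.cons_val_one, ZMod.inr_inv_mul_inl_mul_inr]
      rw [← map_zpow, ← map_mul, ← ofAdd_zsmul, ← ofAdd_add, ← hu, zsmul_one, mul_one,
        Int.cast_neg, add_neg_cancel, ofAdd_zero, map_one]

theorem orderOf_of_zero (hu : (t : ZMod n) = u) :
    orderOf (PresentedGroup.of 0 : PresentedGroup (metacyclicRelators n t)) = n := by
  refine Nat.dvd_antisymm (orderOf_dvd_of_pow_eq_one of_zero_pow) ?_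
  have hdvd := orderOf_map_dvd (toSemidirectProduct hu) (PresentedGroup.of 0)
  rwa [toSemidirectProduct, PresentedGroup.toGroup.of, Matrix.cons_val_zero,
    ZMod.orderOf_inl_ofAdd_one] at hdvd

theorem not_isOfFinOrder_of_one (hu : (t : ZMod n) = u) :
    ¬ IsOfFinOrder (PresentedGroup.of 1 : PresentedGroup (metacyclicRelators n t)) := fun h ↦ by
  have := (toSemidirectProduct hu).isOfFinOrder h
  rw [toSemidirectProduct, PresentedGroup.toGroup.of] at this
  exact ZMod.not_isOfFinOrder_inr_ofAdd_one this

end metacyclicRelators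

/-- For `n ≥ 2` and `gcd(t, n) = 1`, the presented group `⟨a, g ∣ aⁿ, g⁻¹ a g a⁻ᵗ⟩`
is not cyclic: it is an infinite group containing an element of finite order `n > 1`. -/
theorem presented_group_finite_by_infinite_not_cyclic
    (n : ℕ) (hn : 2 ≤ n) (t : ℤ) (ht : Int.gcd t n = 1) :
    let P := PresentedGroup
      ({FreeGroup.of 0 ^ n,
        (FreeGroup.of 1)⁻¹ * FreeGroup.of 0 * FreeGroup.of 1 * FreeGroup.of 0 ^ (-t)} :
        Set (FreeGroup (Fin 2)))
    ¬ IsCyclic P ∧ Infinite P ∧ ∃ x : P, orderOf x = n := by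
  intro P
  have hu := ZMod.coe_unitOfIsCoprime t (Int.isCoprime_iff_gcd_eq_one.mpr ht)
  have horder := metacyclicRelators.orderOf_of_zero hu.symm
  have hinf : Infinite P := .of_not_isOfFinOrder (metacyclicRelators.not_isOfFinOrder_of_one hu.symm)
  exact ⟨not_isCyclic_of_two_le_orderOf (horder ▸ hn), hinf, _, horder⟩
end

section
/- Let m ≥ 2 be a natural number and let E be a group with a normal subgroup N such that N is infinite cyclic (isomorphic to ℤ) and the quotient E/N is cyclic of order m. Then E is cyclic if and only if E is abelian and there exist a generator g of N, an element b ∈ E whose image generates E/N, and an integer t with b^m = g^t and gcd(t, m) = 1. -/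
/-!
If `E = ⟨c⟩`, the image of `c` generates `E ⧸ N` and so has order `m`; hence `N = ⟨cᵐ⟩`, and
`g = cᵐ`, `b = c`, `t = 1` work. Conversely, choose `p t + q m = 1`; in the abelian group `E`
the element `c = bᵖ * g^q` satisfies `cᵗ = b` and `cᵐ = g`. Hence `⟨c⟩` contains `N` and maps
onto `E ⧸ N`, so it is all of `E`.
-/

open Subgroup QuotientGroup

section

variable {G : Type*} [Group G] {N : Subgroup G} [N.Normal] {c : G}

theorem zpowers_mk_eq_top (hc : zpowers c = ⊤) : zpowers (c : G ⧸ N) = ⊤ := by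
  rw [← mk'_apply, ← MonoidHom.map_zpowers, hc, map_top_of_surjective _ (mk'_surjective N)]

theorem orderOf_mk_eq_card_quotient (hc : zpowers c = ⊤) :
    orderOf (c : G ⧸ N) = Nat.card (G ⧸ N) := by
  rw [← Nat.card_zpowers, zpowers_mk_eq_top hc, card_top]

theorem zpowers_pow_card_quotient_eq (hc : zpowers c = ⊤) :
    zpowers (c ^ Nat.card (G ⧸ N)) = N := by
  refine le_antisymm (zpowers_le.2 ?_) fun x hx => ?_
  · rw [← eq_one_iff, mk_pow, pow_card_eq_one']
  · obtain ⟨k, rfl⟩ := mem_zpowers_iff.1 (hc ▸ mem_top x)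
    obtain ⟨j, rfl⟩ : (Nat.card (G ⧸ N) : ℤ) ∣ k := by
      rwa [← orderOf_mk_eq_card_quotient hc, orderOf_dvd_iff_zpow_eq_one, ← mk_zpow, eq_one_iff]
    exact ⟨j, by rw [zpow_mul, zpow_natCast]⟩

theorem zpowers_eq_top_of_le_of_zpowers_mk_eq_top {b : G} (hN : N ≤ zpowers c)
    (hb : zpowers (b : G ⧸ N) = ⊤) (hbc : b ∈ zpowers c) : zpowers c = ⊤ := by
  have hmap : (zpowers c).map (mk' N) = ⊤ :=
    top_le_iff.1 (hb ▸ zpowers_le.2 (mem_map_of_mem _ hbc))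
  rw [← comap_map_eq_self (f := mk' N) (H := zpowers c) (by rwa [ker_mk']), hmap, comap_top]

end

theorem exists_zpow_eq_and_zpow_eq_of_isCoprime {G : Type*} [CommGroup G] {x y : G} {m t : ℤ}
    (h : x ^ m = y ^ t) (hcop : IsCoprime t m) : ∃ c : G, c ^ t = x ∧ c ^ m = y := by
  obtain ⟨p, q, hpq⟩ := hcop
  refine ⟨x ^ p * y ^ q, ?_, ?_⟩
  · calc (x ^ p * y ^ q) ^ t = x ^ (p * t) * (y ^ t) ^ q := by
          rw [mul_zpow, ← zpow_mul, ← zpow_mul, ← zpow_mul, mul_comm q]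
      _ = x := by rw [← h, ← zpow_mul, ← zpow_add, mul_comm m, hpq, zpow_one]
  · calc (x ^ p * y ^ q) ^ m = (x ^ m) ^ p * y ^ (q * m) := by
          rw [mul_zpow, ← zpow_mul, ← zpow_mul, ← zpow_mul, mul_comm p]
      _ = y := by rw [h, ← zpow_mul, ← zpow_add, mul_comm t, hpq, zpow_one]

theorem extension_of_infinite_cyclic_isCyclic_iff_general
    (m : ℕ)
    (E : Type*) [Group E] (N : Subgroup E) [N.Normal]
    (hQcard : Nat.card (E ⧸ N) = m) :
    IsCyclic E ↔
      ((∀ x y : E, x * y = y * x) ∧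
        ∃ (g b : E) (t : ℤ),
          Subgroup.zpowers g = N ∧
          Subgroup.zpowers (QuotientGroup.mk b : E ⧸ N) = ⊤ ∧
          b ^ m = g ^ t ∧ Int.gcd t m = 1) := by
  constructor
  · intro hE
    obtain ⟨c, hc⟩ := isCyclic_iff_exists_zpowers_eq_top.1 hE
    exact ⟨hE.commGroup.mul_comm, c ^ m, c, 1, hQcard ▸ zpowers_pow_card_quotient_eq hc,
      zpowers_mk_eq_top hc, by simp, by simp⟩
  · rintro ⟨hcomm, g, b, t, hgN, hb, hbm, hgcd⟩
    let _ : CommGroup E := { mul_comm := hcomm }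
    obtain ⟨c, hct, hcm⟩ := exists_zpow_eq_and_zpow_eq_of_isCoprime (x := b) (y := g) (m := m)
      (by rwa [zpow_natCast]) (Int.isCoprime_iff_gcd_eq_one.mpr hgcd)
    refine isCyclic_iff_exists_zpowers_eq_top.2
      ⟨c, zpowers_eq_top_of_le_of_zpowers_mk_eq_top ?_ hb ⟨t, hct⟩⟩
    rw [← hgN, zpowers_le, ← hcm]
    exact zpow_mem_zpowers c m

/-- A group `E` with an infinite cyclic normal subgroup `N` and cyclic quotient of order `m`
is cyclic iff `E` is abelian and there are a generator `g` of `N`, an element `b` whose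
image generates `E ⧸ N`, and an integer `t` with `bᵐ = gᵗ` and `gcd(t, m) = 1`. -/
theorem extension_of_infinite_cyclic_isCyclic_iff
    (m : ℕ) (hm : 2 ≤ m)
    (E : Type*) [Group E] (N : Subgroup E) [N.Normal]
    (hNinf : Nonempty (N ≃* Multiplicative ℤ))
    (hQcyc : IsCyclic (E ⧸ N)) (hQcard : Nat.card (E ⧸ N) = m) :
    IsCyclic E ↔
      ((∀ x y : E, x * y = y * x) ∧
        ∃ (g b : E) (t : ℤ),
          Subgroup.zpowers g = N ∧
          Subgroup.zpowers (QuotientGroup.mk b : E ⧸ N) = ⊤ ∧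
          b ^ m = g ^ t ∧ Int.gcd t m = 1) :=
  extension_of_infinite_cyclic_isCyclic_iff_general m E N hQcard
end
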